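/- arXiv:1612.05693 — 8 statements merged into one kernel-verified Lean document; each statement's English description precedes it below -/
import Mathlib

section
/- If G = (V,E) is an undirected connected graph and there is only one team consisting of all agents (the anonymous MAPF setting), then for any set of distinct start vertices and an equal number of distinct target vertices, there exists an assignment of agents to targets and collision-free paths realizing it. In particular, a solution to the TAPF instance exists whenever |V| ≥ number of agents. -/
/-!
Forget the labels first. It suffices to turn the set of start vertices into the set of target
vertices by moves that slide one pebble along an edge onto an empty vertex: if the agents perform
these moves one at a time, they never collide, and wherever they end up defines the assignment
to targets.

For the unlabelled problem on a vertex set `W` inducing a connected subgraph, induct on `W`: pick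
`v ∈ W` whose removal leaves `W` connected (a leaf of a spanning tree). If `v` is a target, slide
some pebble to `v` along a walk and leave it there for good; otherwise push the pebbles along a walk
from an empty vertex to `v`, so that `v` becomes empty. Either way the rest of the problem lives on
`W \ {v}`.
-/

open Finset Function Relation

theorem Relation.ReflTransGen.exists_seq {α : Type*} {r : α → α → Prop} {a b : α}
    (h : ReflTransGen r a b) :
    ∃ (F : ℕ → α) (T : ℕ), F 0 = a ∧ (∀ t ≥ T, F t = b) ∧ ∀ t, ReflGen r (F t) (F (t + 1)) := by
  induction h using ReflTransGen.head_induction_on with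
  | refl => exact ⟨fun _ => b, 0, rfl, fun _ _ => rfl, fun _ => .refl⟩
  | head hac _ ih =>
    obtain ⟨F, T, hF0, hFT, hF⟩ := ih
    refine ⟨fun | 0 => _ | t + 1 => F t, T + 1, rfl, fun t ht => ?_, fun t => ?_⟩
    · cases t with
      | zero => omega
      | succ t => exact hFT t (by omega)
    · cases t with
      | zero => show ReflGen r _ (F 0); rw [hF0]; exact .single hac
      | succ t => exact hF t

theorem Set.range_update_of_injective {ι α : Type*} [DecidableEq ι] {c : ι → α}
    (hc : Injective c) (j : ι) (w : α) :
    Set.range (update c j w) = insert w (Set.range c \ {c j}) := by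
  ext x
  simp only [Set.mem_range, Set.mem_insert_iff, Set.mem_sdiff, Set.mem_singleton_iff]
  constructor
  · rintro ⟨k, rfl⟩
    rcases eq_or_ne k j with rfl | hk
    · exact Or.inl (update_self ..)
    · exact Or.inr ⟨⟨k, (update_of_ne hk ..).symm⟩, by rw [update_of_ne hk]; exact hc.ne hk⟩
  · rintro (rfl | ⟨⟨k, rfl⟩, hk⟩)
    · exact ⟨j, update_self ..⟩
    · exact ⟨k, update_of_ne (fun h => hk (congrArg c h)) ..⟩

theorem Equiv.Perm.exists_apply_eq_of_range_eq {ι α : Type*} {f g : ι → α}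
    (hf : Injective f) (hg : Injective g) (h : Set.range f = Set.range g) :
    ∃ σ : Equiv.Perm ι, ∀ j, g (σ j) = f j :=
  ⟨(Equiv.ofInjective f hf).trans ((Equiv.setCongr h).trans (Equiv.ofInjective g hg).symm),
    fun _ => Equiv.apply_ofInjective_symm hg _⟩

namespace SimpleGraph

variable {V : Type*} {G : SimpleGraph V} {ι : Type*} [DecidableEq ι] {c c' : ι → V}

variable (G) in
def AgentStep (c c' : ι → V) : Prop :=
  ∃ j w, G.Adj (c j) w ∧ w ∉ Set.range c ∧ c' = update c j w

lemma AgentStep.injective (h : G.AgentStep c c') (hc : Injective c) : Injective c' := by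
  obtain ⟨j, w, -, hw, rfl⟩ := h
  intro a b hab
  by_cases ha : a = j <;> by_cases hb : b = j
  · rw [ha, hb]
  · subst ha
    rw [update_self, update_of_ne hb] at hab
    exact absurd ⟨b, hab.symm⟩ hw
  · subst hb
    rw [update_self, update_of_ne ha] at hab
    exact absurd ⟨a, hab⟩ hw
  · rw [update_of_ne ha, update_of_ne hb] at hab
    exact hc hab

lemma injective_of_reflGen_agentStep (h : ReflGen G.AgentStep c c') (hc : Injective c) :
    Injective c' := by
  cases h with
  | refl => exact hc
  | single h => exact h.injective hc

lemma eq_or_adj_of_reflGen_agentStep (h : ReflGen G.AgentStep c c') (i : ι) :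
    c i = c' i ∨ G.Adj (c i) (c' i) := by
  cases h with
  | refl => exact Or.inl rfl
  | single h =>
    obtain ⟨j, w, hadj, -, rfl⟩ := h
    rcases eq_or_ne i j with rfl | hi
    · exact Or.inr (by rwa [update_self])
    · exact Or.inl (update_of_ne hi ..).symm

lemma ne_of_reflGen_agentStep (h : ReflGen G.AgentStep c c') (hc : Injective c) {i i' : ι}
    (hii' : i ≠ i') : c i ≠ c' i' := by
  cases h with
  | refl => exact hc.ne hii'
  | single h =>
    obtain ⟨j, w, -, hw, rfl⟩ := h
    by_cases hi' : i' = j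
    · subst hi'
      rw [update_self]
      exact fun hiw => hw ⟨i, hiw⟩
    · rw [update_of_ne hi']
      exact hc.ne hii'

section Pebbles

variable [DecidableEq V] (G)

def PebbleStep (W S S' : Finset V) : Prop :=
  ∃ u ∈ S, ∃ w ∈ W, w ∉ S ∧ G.Adj u w ∧ S' = insert w (S.erase u)

def PebbleReach (W : Finset V) : Finset V → Finset V → Prop :=
  ReflTransGen (G.PebbleStep W)

variable {G} {W W' S S' T : Finset V} {v : V}

lemma PebbleStep.subset (h : G.PebbleStep W S S') (hS : S ⊆ W) : S' ⊆ W := by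
  obtain ⟨u, -, w, hw, -, -, rfl⟩ := h
  exact insert_subset hw ((erase_subset u S).trans hS)

lemma PebbleStep.card_eq (h : G.PebbleStep W S S') : #S' = #S := by
  obtain ⟨u, hu, w, -, hwS, -, rfl⟩ := h
  rw [card_insert_of_notMem (fun h => hwS (mem_of_mem_erase h)), card_erase_add_one hu]

lemma PebbleStep.mono (h : G.PebbleStep W S S') (hW : W ⊆ W') : G.PebbleStep W' S S' := by
  obtain ⟨u, hu, w, hw, hwS, hadj, rfl⟩ := h
  exact ⟨u, hu, w, hW hw, hwS, hadj, rfl⟩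

lemma PebbleStep.insert (h : G.PebbleStep W S S') (hvS : v ∉ S) (hvW : v ∉ W) :
    G.PebbleStep (insert v W) (insert v S) (insert v S') := by
  obtain ⟨u, hu, w, hw, hwS, hadj, rfl⟩ := h
  have huv : v ≠ u := by rintro rfl; exact hvS hu
  have hwv : w ≠ v := by rintro rfl; exact hvW hw
  refine ⟨u, mem_insert_of_mem hu, w, mem_insert_of_mem hw, by simp [hwv, hwS], hadj, ?_⟩
  rw [erase_insert_of_ne huv, Finset.insert_comm]

lemma PebbleReach.subset (h : G.PebbleReach W S T) (hS : S ⊆ W) : T ⊆ W := by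
  induction h with
  | refl => exact hS
  | tail _ hstep ih => exact hstep.subset ih

lemma PebbleReach.card_eq (h : G.PebbleReach W S T) : #T = #S := by
  induction h with
  | refl => rfl
  | tail _ hstep ih => rw [hstep.card_eq, ih]

lemma PebbleReach.mono (h : G.PebbleReach W S T) (hW : W ⊆ W') : G.PebbleReach W' S T := by
  induction h with
  | refl => exact .refl
  | tail _ hstep ih => exact ih.tail (hstep.mono hW)

lemma PebbleReach.insert (h : G.PebbleReach W S T) (hS : S ⊆ W) (hvW : v ∉ W) :
    G.PebbleReach (insert v W) (insert v S) (insert v T) := by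
  induction h with
  | refl => exact .refl
  | tail hr hstep ih =>
    exact ih.tail (hstep.insert (fun hv => hvW (PebbleReach.subset hr hS hv)) hvW)

lemma exists_pebbleReach_mem {w u : (W : Set V)} (p : (G.induce W).Walk w u) (hu : u.1 ∈ S) :
    ∃ S', G.PebbleReach W S S' ∧ w.1 ∈ S' := by
  induction p with
  | nil => exact ⟨S, .refl, hu⟩
  | @cons w x u hadj _ ih =>
    obtain ⟨S₁, hr, hx⟩ := ih hu
    by_cases hw : w.1 ∈ S₁
    · exact ⟨S₁, hr, hw⟩
    · exact ⟨_, hr.tail ⟨x, hx, w, w.2, hw, hadj.symm, rfl⟩, mem_insert_self _ _⟩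

lemma exists_pebbleReach_notMem {v f : (W : Set V)} (p : (G.induce W).Walk v f)
    (hf : f.1 ∉ S) : ∃ S', G.PebbleReach W S S' ∧ v.1 ∉ S' := by
  induction p with
  | nil => exact ⟨S, .refl, hf⟩
  | @cons v x f hadj _ ih =>
    obtain ⟨S₁, hr, hx⟩ := ih hf
    by_cases hv : v.1 ∈ S₁
    · refine ⟨_, hr.tail ⟨v, hv, x, x.2, hx, hadj, rfl⟩, ?_⟩
      simp [(G.ne_of_adj hadj : v.1 ≠ x.1)]
    · exact ⟨S₁, hr, hv⟩

lemma exists_preconnected_induce_erase (hW : (G.induce (W : Set V)).Preconnected)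
    (hne : W.Nonempty) : ∃ v ∈ W, (G.induce (W.erase v : Set V)).Preconnected := by
  have : Nonempty (W : Set V) := hne.coe_sort
  obtain ⟨⟨v, hvW⟩, hv⟩ := (Connected.mk hW).exists_preconnected_induce_compl_singleton_of_finite
  refine ⟨v, hvW, hv.map ⟨fun x => ⟨x.1.1, mem_erase.2 ⟨fun h => x.2 (Subtype.ext h), x.1.2⟩⟩,
    fun h => h⟩ ?_⟩
  rintro ⟨y, hy⟩
  obtain ⟨hyv, hyW⟩ := mem_erase.1 hy
  exact ⟨⟨⟨y, hyW⟩, fun h => hyv (congrArg Subtype.val h)⟩, rfl⟩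

theorem pebbleReach_of_card_eq (hW : (G.induce (W : Set V)).Preconnected) (hS : S ⊆ W)
    (hT : T ⊆ W) (hST : #S = #T) : G.PebbleReach W S T := by
  induction W using Finset.strongInduction generalizing S T with
  | _ W ih =>
  rcases W.eq_empty_or_nonempty with rfl | hne
  · rw [subset_empty.1 hS, subset_empty.1 hT]
    exact .refl
  obtain ⟨v, hvW, hv⟩ := exists_preconnected_induce_erase hW hne
  have ih' : ∀ {S T : Finset V}, S ⊆ W.erase v → T ⊆ W.erase v → #S = #T →
      G.PebbleReach (W.erase v) S T := ih _ (erase_ssubset hvW) hv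
  by_cases hvT : v ∈ T
  · obtain ⟨S₁, hr, hvS₁⟩ : ∃ S₁, G.PebbleReach W S S₁ ∧ v ∈ S₁ := by
      obtain ⟨u, hu⟩ : S.Nonempty := card_pos.1 (hST ▸ card_pos.2 ⟨v, hvT⟩)
      obtain ⟨p⟩ := hW ⟨v, hvW⟩ ⟨u, hS hu⟩
      exact exists_pebbleReach_mem p hu
    have hS₁ : S₁.erase v ⊆ W.erase v := erase_subset_erase v (hr.subset hS)
    have hrest := (ih' hS₁ (erase_subset_erase v hT) (by
      rw [card_erase_of_mem hvS₁, card_erase_of_mem hvT, hr.card_eq, hST])).insert hS₁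
      (notMem_erase v W)
    rw [insert_erase hvW, insert_erase hvS₁, insert_erase hvT] at hrest
    exact hr.trans hrest
  · have hTv : T ⊆ W.erase v := subset_erase.2 ⟨hT, hvT⟩
    obtain ⟨S₂, hr, hvS₂⟩ : ∃ S₂, G.PebbleReach W S S₂ ∧ v ∉ S₂ := by
      obtain ⟨f, hfW, hfS⟩ := exists_mem_notMem_of_card_lt_card
        (hST ▸ (card_le_card hTv).trans_lt (card_erase_lt_of_mem hvW))
      obtain ⟨p⟩ := hW ⟨v, hvW⟩ ⟨f, hfW⟩
      exact exists_pebbleReach_notMem p hfS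
    have hrest := ih' (subset_erase.2 ⟨hr.subset hS, hvS₂⟩) hTv (by rw [hr.card_eq, hST])
    exact hr.trans (hrest.mono (erase_subset v W))

lemma PebbleStep.exists_agentStep (h : G.PebbleStep W S S') (hc : Injective c)
    (hcS : Set.range c = S) : ∃ c', G.AgentStep c c' ∧ Set.range c' = S' := by
  obtain ⟨u, hu, w, -, hwS, hadj, rfl⟩ := h
  obtain ⟨j, rfl⟩ : u ∈ Set.range c := hcS ▸ hu
  refine ⟨update c j w, ⟨j, w, hadj, hcS ▸ hwS, rfl⟩, ?_⟩
  rw [Set.range_update_of_injective hc, hcS, coe_insert, coe_erase]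

lemma PebbleReach.exists_agentReach (h : G.PebbleReach W S T) (hc : Injective c)
    (hcS : Set.range c = S) :
    ∃ c', ReflTransGen G.AgentStep c c' ∧ Injective c' ∧ Set.range c' = T := by
  induction h generalizing c with
  | refl => exact ⟨c, .refl, hc, hcS⟩
  | tail _ hstep ih =>
    obtain ⟨c₁, hr, hc₁, hc₁S⟩ := ih hc hcS
    obtain ⟨c', hstep', hc'S⟩ := hstep.exists_agentStep hc₁ hc₁S
    exact ⟨c', hr.tail hstep', hstep'.injective hc₁, hc'S⟩

end Pebbles

end SimpleGraph

theorem stmt0_general {V : Type*} [Fintype V] (G : SimpleGraph V) (hG : G.Connected)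
    (n : ℕ) (s g : Fin n ↪ V) :
    ∃ (φ : Equiv.Perm (Fin n)) (l : Fin n → ℕ → V) (T : ℕ),
      (∀ j, l j 0 = s j) ∧
      (∀ j, ∀ t ≥ T, l j t = g (φ j)) ∧
      (∀ j t, l j t = l j (t + 1) ∨ G.Adj (l j t) (l j (t + 1))) ∧
      (∀ j j' t, j ≠ j' → l j t ≠ l j' t) ∧
      (∀ j j' t, j ≠ j' → ¬(l j t = l j' (t + 1) ∧ l j' t = l j (t + 1))) := by
  classical
  have hW : (G.induce ((univ : Finset V) : Set V)).Preconnected := by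
    rw [coe_univ]
    exact G.induceUnivIso.symm.preconnected_iff.1 hG.preconnected
  have hpebble : G.PebbleReach univ (univ.image s) (univ.image g) :=
    SimpleGraph.pebbleReach_of_card_eq hW (subset_univ _) (subset_univ _) (by
      rw [card_image_of_injective _ s.injective, card_image_of_injective _ g.injective])
  obtain ⟨c, hsc, hc, hcg⟩ := hpebble.exists_agentReach s.injective (by simp)
  obtain ⟨φ, hφ⟩ := Equiv.Perm.exists_apply_eq_of_range_eq hc g.injective (by simpa using hcg)
  obtain ⟨F, T, hF0, hFT, hF⟩ := hsc.exists_seq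
  have hFinj : ∀ t, Injective (F t) := by
    intro t
    induction t with
    | zero => exact hF0 ▸ s.injective
    | succ t ih => exact SimpleGraph.injective_of_reflGen_agentStep (hF t) ih
  refine ⟨φ, fun j t => F t j, T, fun j => congrFun hF0 j, ?_, ?_, ?_, ?_⟩
  · exact fun j t ht => (congrFun (hFT t ht) j).trans (hφ j).symm
  · exact fun j t => SimpleGraph.eq_or_adj_of_reflGen_agentStep (hF t) j
  · exact fun j j' t hjj' => (hFinj t).ne hjj'
  · exact fun j j' t hjj' h => SimpleGraph.ne_of_reflGen_agentStep (hF t) (hFinj t) hjj' h.1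

/-- Anonymous MAPF (single team of all agents): on a connected graph, for any
distinct start vertices and equally many distinct targets, there exists an
assignment of agents to targets and collision-free paths realizing it. -/
theorem stmt0 {V : Type*} [Fintype V] (G : SimpleGraph V) (hG : G.Connected)
    (n : ℕ) (hcard : n ≤ Fintype.card V) (s g : Fin n ↪ V) :
    ∃ (φ : Equiv.Perm (Fin n)) (l : Fin n → ℕ → V) (T : ℕ),
      (∀ j, l j 0 = s j) ∧
      (∀ j, ∀ t ≥ T, l j t = g (φ j)) ∧
      (∀ j t, l j t = l j (t + 1) ∨ G.Adj (l j t) (l j (t + 1))) ∧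
      (∀ j j' t, j ≠ j' → l j t ≠ l j' t) ∧
      (∀ j j' t, j ≠ j' → ¬(l j t = l j' (t + 1) ∧ l j' t = l j (t + 1))) :=
  stmt0_general G hG n s g
end

section
/- Given a team of k agents with distinct start vertices and k distinct targets in an undirected graph, paths for the agents that avoid vertex and edge collisions among themselves and achieve team cost at most T correspond bijectively (up to permutation of unit flows) to integer flows of value k in the T-step time-expanded network: each unit of flow from a source to a sink yields a path obeying the construction's constraints, and conversely. -/
/-- Vertices of the T-step time-expanded network: `inn v t` is v in the
beginning of time step t, `out v t` is v at the end of time step t, and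
`gw u v t`, `gw' u v t` are the auxiliary gadget vertices for the undirected
edge {u,v} (represented with u < v) at time step t. -/
inductive NetV (V : Type*) where
  | inn : V → ℕ → NetV V
  | out : V → ℕ → NetV V
  | gw : V → V → ℕ → NetV V
  | gw' : V → V → ℕ → NetV V

/-- The (unit-capacity) directed edges of the T-step time-expanded network of
graph G: waiting edges, vertex-collision-preventing edges, and the gadget
edges (one gadget per undirected edge of G and time step). -/
def NetEdge {V : Type*} [LinearOrder V] (G : SimpleGraph V) (T : ℕ) :
    NetV V → NetV V → Prop := fun x y =>
  (∃ v t, t < T ∧ x = NetV.out v t ∧ y = NetV.inn v (t + 1)) ∨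
  (∃ v t, 1 ≤ t ∧ t ≤ T ∧ x = NetV.inn v t ∧ y = NetV.out v t) ∨
  (∃ u v t, G.Adj u v ∧ u < v ∧ t < T ∧
    ((x = NetV.out u t ∧ y = NetV.gw u v t) ∨
     (x = NetV.out v t ∧ y = NetV.gw u v t) ∨
     (x = NetV.gw u v t ∧ y = NetV.gw' u v t) ∨
     (x = NetV.gw' u v t ∧ y = NetV.inn u (t + 1)) ∨
     (x = NetV.gw' u v t ∧ y = NetV.inn v (t + 1))))

/-- A feasible integer (single-commodity) flow on the T-step time-expanded
network, with unit capacities, unit supplies on the set `supply` and unit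
demands on the set `demand`. -/
def IsIntFlow {V : Type*} [LinearOrder V] (G : SimpleGraph V) (T : ℕ)
    (supply demand : Set (NetV V)) (f : NetV V → NetV V → ℕ) : Prop :=
  (∀ x y, f x y ≤ 1) ∧
  (∀ x y, ¬ NetEdge G T x y → f x y = 0) ∧
  (∀ x, (∑ᶠ y, f y x) + supply.indicator (fun _ => 1) x
      = (∑ᶠ y, f x y) + demand.indicator (fun _ => 1) x)

namespace MAPF

open Function
set_option linter.unusedSectionVars false

variable {V : Type*} [Fintype V] [LinearOrder V] {G : SimpleGraph V} {T : ℕ}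

lemma edge_from_inn {v : V} {t : ℕ} {y : NetV V} (h : NetEdge G T (NetV.inn v t) y) :
    1 ≤ t ∧ t ≤ T ∧ y = NetV.out v t := by
  rcases h with ⟨v',t',ht',hx,hy⟩ | ⟨v',t',h1,h2,hx,hy⟩ |
    ⟨a,b,t',hadj,hab,ht',(⟨hx,hy⟩|⟨hx,hy⟩|⟨hx,hy⟩|⟨hx,hy⟩|⟨hx,hy⟩)⟩ <;> simp_all

lemma edge_from_gw {a b : V} {t : ℕ} {y : NetV V} (h : NetEdge G T (NetV.gw a b t) y) :
    G.Adj a b ∧ a < b ∧ t < T ∧ y = NetV.gw' a b t := by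
  rcases h with ⟨v',t',ht',hx,hy⟩ | ⟨v',t',h1,h2,hx,hy⟩ |
    ⟨a',b',t',hadj,hab,ht',(⟨hx,hy⟩|⟨hx,hy⟩|⟨hx,hy⟩|⟨hx,hy⟩|⟨hx,hy⟩)⟩ <;> simp_all

lemma edge_from_gw' {a b : V} {t : ℕ} {y : NetV V} (h : NetEdge G T (NetV.gw' a b t) y) :
    G.Adj a b ∧ a < b ∧ t < T ∧ (y = NetV.inn a (t+1) ∨ y = NetV.inn b (t+1)) := by
  rcases h with ⟨v',t',ht',hx,hy⟩ | ⟨v',t',h1,h2,hx,hy⟩ |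
    ⟨a',b',t',hadj,hab,ht',(⟨hx,hy⟩|⟨hx,hy⟩|⟨hx,hy⟩|⟨hx,hy⟩|⟨hx,hy⟩)⟩ <;> simp_all

lemma edge_from_out {v : V} {t : ℕ} {y : NetV V} (h : NetEdge G T (NetV.out v t) y) :
    (t < T ∧ y = NetV.inn v (t+1)) ∨
    (∃ a b, G.Adj a b ∧ a < b ∧ t < T ∧ (v = a ∨ v = b) ∧ y = NetV.gw a b t) := by
  rcases h with ⟨v',t',ht',hx,hy⟩ | ⟨v',t',h1,h2,hx,hy⟩ |
    ⟨a',b',t',hadj,hab,ht',(⟨hx,hy⟩|⟨hx,hy⟩|⟨hx,hy⟩|⟨hx,hy⟩|⟨hx,hy⟩)⟩ <;>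
    simp_all <;> first | tauto | exact ⟨a', b', hadj, hab, by tauto⟩ | exact ⟨a', b', hadj, hab, t', ht', by tauto⟩

lemma edge_to_inn {v : V} {t : ℕ} {x : NetV V} (h : NetEdge G T x (NetV.inn v t)) :
    (∃ t', t = t'+1 ∧ t' < T ∧ x = NetV.out v t') ∨
    (∃ a b t', G.Adj a b ∧ a < b ∧ t' < T ∧ t = t'+1 ∧ (v = a ∨ v = b) ∧ x = NetV.gw' a b t') := by
  rcases h with ⟨v',t',ht',hx,hy⟩ | ⟨v',t',h1,h2,hx,hy⟩ |
    ⟨a',b',t',hadj,hab,ht',(⟨hx,hy⟩|⟨hx,hy⟩|⟨hx,hy⟩|⟨hx,hy⟩|⟨hx,hy⟩)⟩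
  · injection hy with h1 h2
    exact Or.inl ⟨t', h2, ht', by rw [h1]; exact hx⟩
  · exact absurd hy (by simp)
  · exact absurd hy (by simp)
  · exact absurd hy (by simp)
  · exact absurd hy (by simp)
  · injection hy with h1 h2
    exact Or.inr ⟨a', b', t', hadj, hab, ht', h2, Or.inl h1, hx⟩
  · injection hy with h1 h2
    exact Or.inr ⟨a', b', t', hadj, hab, ht', h2, Or.inr h1, hx⟩

lemma edge_to_out {v : V} {t : ℕ} {x : NetV V} (h : NetEdge G T x (NetV.out v t)) :
    1 ≤ t ∧ t ≤ T ∧ x = NetV.inn v t := by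
  rcases h with ⟨v',t',ht',hx,hy⟩ | ⟨v',t',h1,h2,hx,hy⟩ |
    ⟨a',b',t',hadj,hab,ht',(⟨hx,hy⟩|⟨hx,hy⟩|⟨hx,hy⟩|⟨hx,hy⟩|⟨hx,hy⟩)⟩ <;> simp_all

lemma edge_to_gw {a b : V} {t : ℕ} {x : NetV V} (h : NetEdge G T x (NetV.gw a b t)) :
    G.Adj a b ∧ a < b ∧ t < T ∧ (x = NetV.out a t ∨ x = NetV.out b t) := by
  rcases h with ⟨v',t',ht',hx,hy⟩ | ⟨v',t',h1,h2,hx,hy⟩ |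
    ⟨a',b',t',hadj,hab,ht',(⟨hx,hy⟩|⟨hx,hy⟩|⟨hx,hy⟩|⟨hx,hy⟩|⟨hx,hy⟩)⟩ <;> simp_all

lemma edge_to_gw' {a b : V} {t : ℕ} {x : NetV V} (h : NetEdge G T x (NetV.gw' a b t)) :
    G.Adj a b ∧ a < b ∧ t < T ∧ x = NetV.gw a b t := by
  rcases h with ⟨v',t',ht',hx,hy⟩ | ⟨v',t',h1,h2,hx,hy⟩ |
    ⟨a',b',t',hadj,hab,ht',(⟨hx,hy⟩|⟨hx,hy⟩|⟨hx,hy⟩|⟨hx,hy⟩|⟨hx,hy⟩)⟩ <;> simp_all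


section Helpers

lemma pair_le_finsum' {α : Type*} (g : α → ℕ) (hg : (Function.support g).Finite)
    {a b : α} (hab : a ≠ b) : g a + g b ≤ ∑ᶠ y, g y := by
  classical
  have hsub : Function.support g ⊆ ↑(hg.toFinset ∪ {a, b}) := by
    intro x hx; simp [hg.mem_toFinset, hx]
  rw [finsum_eq_sum_of_support_subset g hsub, ← Finset.sum_pair hab]
  exact Finset.sum_le_sum_of_subset (by intro x hx; simp at hx ⊢; tauto)

lemma single_le_finsum'' {α : Type*} (g : α → ℕ) (hg : (Function.support g).Finite) (a : α) :
    g a ≤ ∑ᶠ y, g y := single_le_finsum a hg (fun _ => Nat.zero_le _)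

lemma finsum_eq_pair {α : Type*} (g : α → ℕ) {a b : α} (hab : a ≠ b)
    (h : ∀ y, y ≠ a → y ≠ b → g y = 0) : ∑ᶠ y, g y = g a + g b := by
  classical
  have hsub : Function.support g ⊆ ↑({a, b} : Finset α) := by
    intro x hx
    by_contra hm
    simp at hm
    exact hx (h x hm.1 hm.2)
  rw [finsum_eq_sum_of_support_subset g hsub, Finset.sum_pair hab]

end Helpers

section Finiteness

variable (G T) in
lemma edgeSet_from_finite (x : NetV V) : {y | NetEdge G T x y}.Finite := by
  cases x with
  | inn v t =>
    refine Set.Finite.subset (Set.finite_singleton (NetV.out v t)) fun y hy => ?_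
    exact (edge_from_inn hy).2.2
  | out v t =>
    refine Set.Finite.subset (Set.Finite.union (Set.finite_singleton (NetV.inn v (t+1)))
      (Set.Finite.image (fun p : V × V => NetV.gw p.1 p.2 t) Set.finite_univ)) fun y hy => ?_
    rcases edge_from_out hy with ⟨_, rfl⟩ | ⟨a, b, _, _, _, _, rfl⟩
    · exact Or.inl rfl
    · exact Or.inr ⟨(a, b), trivial, rfl⟩
  | gw a b t =>
    refine Set.Finite.subset (Set.finite_singleton (NetV.gw' a b t)) fun y hy => ?_
    exact (edge_from_gw hy).2.2.2
  | gw' a b t =>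
    refine Set.Finite.subset (Set.Finite.union (Set.finite_singleton (NetV.inn a (t+1)))
      (Set.finite_singleton (NetV.inn b (t+1)))) fun y hy => ?_
    exact (edge_from_gw' hy).2.2.2

variable (G T) in
lemma edgeSet_to_finite (x : NetV V) : {y | NetEdge G T y x}.Finite := by
  cases x with
  | inn v t =>
    refine Set.Finite.subset (Set.Finite.union (Set.finite_singleton (NetV.out v (t-1)))
      (Set.Finite.image (fun p : V × V => NetV.gw' p.1 p.2 (t-1)) Set.finite_univ))
      fun y hy => ?_
    rcases edge_to_inn hy with ⟨t', h1, _, rfl⟩ | ⟨a, b, t', _, _, _, h1, _, rfl⟩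
    · left; simp [h1]
    · right; exact ⟨(a, b), trivial, by simp [h1]⟩
  | out v t =>
    refine Set.Finite.subset (Set.finite_singleton (NetV.inn v t)) fun y hy => ?_
    exact (edge_to_out hy).2.2
  | gw a b t =>
    refine Set.Finite.subset (Set.Finite.union (Set.finite_singleton (NetV.out a t))
      (Set.finite_singleton (NetV.out b t))) fun y hy => ?_
    exact (edge_to_gw hy).2.2.2
  | gw' a b t =>
    refine Set.Finite.subset (Set.finite_singleton (NetV.gw a b t)) fun y hy => ?_
    exact (edge_to_gw' hy).2.2.2

variable {f : NetV V → NetV V → ℕ}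

lemma support_out_finite (hf0 : ∀ x y, ¬ NetEdge G T x y → f x y = 0) (x : NetV V) :
    (Function.support (f x)).Finite := by
  refine Set.Finite.subset (edgeSet_from_finite G T x) fun y hy => ?_
  by_contra h
  exact hy (hf0 x y h)

lemma support_in_finite (hf0 : ∀ x y, ¬ NetEdge G T x y → f x y = 0) (x : NetV V) :
    (Function.support fun y => f y x).Finite := by
  refine Set.Finite.subset (edgeSet_to_finite G T x) fun y hy => ?_
  by_contra h
  exact hy (hf0 y x h)

end Finiteness

section Forward

variable {f : NetV V → NetV V → ℕ} {k : ℕ} {s g : Fin k ↪ V}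

variable (G f) in
/-- One unit of flow moves from `out v t` to `inn w (t+1)` (then necessarily on
to `out w (t+1)`), either by the waiting edge or through a gadget. -/
def Route (v w : V) (t : ℕ) : Prop :=
  (f (NetV.out v t) (NetV.inn v (t+1)) = 1 ∧ w = v) ∨
  (∃ a b, G.Adj a b ∧ a < b ∧ (v = a ∨ v = b) ∧ (w = a ∨ w = b) ∧
    f (NetV.out v t) (NetV.gw a b t) = 1 ∧
    f (NetV.gw a b t) (NetV.gw' a b t) = 1 ∧
    f (NetV.gw' a b t) (NetV.inn w (t+1)) = 1)

variable (G f) in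
noncomputable def nxt (v : V) (t : ℕ) : V :=
  @dite _ (∃ w, Route G f v w t) (Classical.dec _) (fun h => h.choose) (fun _ => v)

variable (G f) in
noncomputable def trace (s : Fin k ↪ V) (j : Fin k) : ℕ → V
  | 0 => s j
  | t + 1 => nxt G f (trace s j t) t

section FlowLemmas


lemma flow_from_inn
    (hf0 : ∀ x y, ¬ NetEdge G T x y → f x y = 0)
    (v : V) (t : ℕ) :
    ∑ᶠ y, f (NetV.inn v t) y = f (NetV.inn v t) (NetV.out v t) :=
  finsum_eq_single _ _ fun y hy => hf0 _ _ fun h => hy (edge_from_inn h).2.2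

lemma flow_from_gw
    (hf0 : ∀ x y, ¬ NetEdge G T x y → f x y = 0)
    (a b : V) (t : ℕ) :
    ∑ᶠ y, f (NetV.gw a b t) y = f (NetV.gw a b t) (NetV.gw' a b t) :=
  finsum_eq_single _ _ fun y hy => hf0 _ _ fun h => hy (edge_from_gw h).2.2.2

lemma flow_from_gw'
    (hf0 : ∀ x y, ¬ NetEdge G T x y → f x y = 0)
    {a b : V} (hab : a ≠ b) (t : ℕ) :
    ∑ᶠ y, f (NetV.gw' a b t) y
      = f (NetV.gw' a b t) (NetV.inn a (t+1)) + f (NetV.gw' a b t) (NetV.inn b (t+1)) :=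
  finsum_eq_pair _ (by simp [hab]) fun y h1 h2 => hf0 _ _ fun h =>
    (edge_from_gw' h).2.2.2.elim h1 h2

lemma flow_from_out_ge
    (hf0 : ∀ x y, ¬ NetEdge G T x y → f x y = 0)
    {t : ℕ} (hT : T ≤ t) (v : V) :
    ∑ᶠ y, f (NetV.out v t) y = 0 :=
  finsum_eq_zero_of_forall_eq_zero fun y => hf0 _ _ fun h => by
    rcases edge_from_out h with ⟨h1, _⟩ | ⟨a, b, _, _, h1, _, _⟩ <;> omega

lemma flow_to_out
    (hf0 : ∀ x y, ¬ NetEdge G T x y → f x y = 0)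
    (v : V) (t : ℕ) :
    ∑ᶠ y, f y (NetV.out v t) = f (NetV.inn v t) (NetV.out v t) :=
  finsum_eq_single _ _ fun y hy => hf0 _ _ fun h => hy (edge_to_out h).2.2

lemma cons_inn
    (hcons : ∀ x, (∑ᶠ y, f y x)
      + Set.indicator {x | ∃ j, x = NetV.out (s j) 0} (fun _ => 1) x
    = (∑ᶠ y, f x y)
      + Set.indicator {x | ∃ j, x = NetV.out (g j) T} (fun _ => 1) x)
    (v : V) (t : ℕ) :
    ∑ᶠ y, f y (NetV.inn v t) = ∑ᶠ y, f (NetV.inn v t) y := by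
  have h := hcons (NetV.inn v t)
  rw [Set.indicator_of_notMem (by simp), Set.indicator_of_notMem (by simp)] at h
  simpa using h

lemma cons_gw
    (hcons : ∀ x, (∑ᶠ y, f y x)
      + Set.indicator {x | ∃ j, x = NetV.out (s j) 0} (fun _ => 1) x
    = (∑ᶠ y, f x y)
      + Set.indicator {x | ∃ j, x = NetV.out (g j) T} (fun _ => 1) x)
    (a b : V) (t : ℕ) :
    ∑ᶠ y, f y (NetV.gw a b t) = ∑ᶠ y, f (NetV.gw a b t) y := by
  have h := hcons (NetV.gw a b t)
  rw [Set.indicator_of_notMem (by simp), Set.indicator_of_notMem (by simp)] at h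
  simpa using h

lemma cons_gw'
    (hcons : ∀ x, (∑ᶠ y, f y x)
      + Set.indicator {x | ∃ j, x = NetV.out (s j) 0} (fun _ => 1) x
    = (∑ᶠ y, f x y)
      + Set.indicator {x | ∃ j, x = NetV.out (g j) T} (fun _ => 1) x)
    (a b : V) (t : ℕ) :
    ∑ᶠ y, f y (NetV.gw' a b t) = ∑ᶠ y, f (NetV.gw' a b t) y := by
  have h := hcons (NetV.gw' a b t)
  rw [Set.indicator_of_notMem (by simp), Set.indicator_of_notMem (by simp)] at h
  simpa using h

lemma inn_flow_le_one
    (hcap : ∀ x y, f x y ≤ 1)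
    (hf0 : ∀ x y, ¬ NetEdge G T x y → f x y = 0)
    (hcons : ∀ x, (∑ᶠ y, f y x)
      + Set.indicator {x | ∃ j, x = NetV.out (s j) 0} (fun _ => 1) x
    = (∑ᶠ y, f x y)
      + Set.indicator {x | ∃ j, x = NetV.out (g j) T} (fun _ => 1) x)
    (v : V) (t : ℕ) : ∑ᶠ y, f y (NetV.inn v t) ≤ 1 := by
  rw [cons_inn (s := s) (g := g) hcons, flow_from_inn hf0]
  exact hcap _ _

lemma gw_flow_le_one
    (hcap : ∀ x y, f x y ≤ 1)
    (hf0 : ∀ x y, ¬ NetEdge G T x y → f x y = 0)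
    (hcons : ∀ x, (∑ᶠ y, f y x)
      + Set.indicator {x | ∃ j, x = NetV.out (s j) 0} (fun _ => 1) x
    = (∑ᶠ y, f x y)
      + Set.indicator {x | ∃ j, x = NetV.out (g j) T} (fun _ => 1) x)
    (a b : V) (t : ℕ) : ∑ᶠ y, f y (NetV.gw a b t) ≤ 1 := by
  rw [cons_gw (s := s) (g := g) hcons, flow_from_gw hf0]
  exact hcap _ _

lemma route_exists
    (hcap : ∀ x y, f x y ≤ 1)
    (hf0 : ∀ x y, ¬ NetEdge G T x y → f x y = 0)
    (hcons : ∀ x, (∑ᶠ y, f y x)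
      + Set.indicator {x | ∃ j, x = NetV.out (s j) 0} (fun _ => 1) x
    = (∑ᶠ y, f x y)
      + Set.indicator {x | ∃ j, x = NetV.out (g j) T} (fun _ => 1) x)
    {v : V} {t : ℕ} (ht : t < T)
    (hocc : 1 ≤ (∑ᶠ y, f y (NetV.out v t))
      + Set.indicator {x | ∃ j, x = NetV.out (s j) 0} (fun _ => 1) (NetV.out v t)) :
    ∃ w, Route G f v w t := by
  have hcx := hcons (NetV.out v t)
  rw [Set.indicator_of_notMem (show (NetV.out v t : NetV V)
      ∉ {x | ∃ j, x = NetV.out (g j) T} by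
    simp only [Set.mem_setOf_eq, NetV.out.injEq, not_exists, not_and]
    intro j _; omega)] at hcx
  have hO : 1 ≤ ∑ᶠ y, f (NetV.out v t) y := by omega
  have hne : ∃ y, f (NetV.out v t) y ≠ 0 := by
    by_contra h
    push_neg at h
    rw [finsum_eq_zero_of_forall_eq_zero h] at hO
    omega
  obtain ⟨y, hy⟩ := hne
  have hedge : NetEdge G T (NetV.out v t) y := by
    by_contra h; exact hy (hf0 _ _ h)
  have hy1 : f (NetV.out v t) y = 1 :=
    le_antisymm (hcap _ _) (Nat.one_le_iff_ne_zero.mpr hy)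
  rcases edge_from_out hedge with ⟨_, rfl⟩ | ⟨a, b, hadj, hab, _, hv, rfl⟩
  · exact ⟨v, Or.inl ⟨hy1, rfl⟩⟩
  · have h1 : 1 ≤ ∑ᶠ z, f z (NetV.gw a b t) := by
      calc 1 = f (NetV.out v t) (NetV.gw a b t) := hy1.symm
        _ ≤ _ := single_le_finsum'' _ (support_in_finite hf0 _) _
    have h2 : f (NetV.gw a b t) (NetV.gw' a b t) = 1 := by
      refine le_antisymm (hcap _ _) ?_
      rw [← flow_from_gw hf0, ← cons_gw (s := s) (g := g) hcons]
      exact h1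
    have h3 : 1 ≤ ∑ᶠ z, f z (NetV.gw' a b t) := by
      calc 1 = f (NetV.gw a b t) (NetV.gw' a b t) := h2.symm
        _ ≤ _ := single_le_finsum'' _ (support_in_finite hf0 _) _
    have h4 : 1 ≤ f (NetV.gw' a b t) (NetV.inn a (t+1))
        + f (NetV.gw' a b t) (NetV.inn b (t+1)) := by
      rw [← flow_from_gw' hf0 hab.ne, ← cons_gw' (s := s) (g := g) hcons]
      exact h3
    rcases Nat.eq_zero_or_pos (f (NetV.gw' a b t) (NetV.inn a (t+1))) with h5 | h5
    · have h6 : f (NetV.gw' a b t) (NetV.inn b (t+1)) = 1 :=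
        le_antisymm (hcap _ _) (by omega)
      exact ⟨b, Or.inr ⟨a, b, hadj, hab, hv, Or.inr rfl, hy1, h2, h6⟩⟩
    · have h6 : f (NetV.gw' a b t) (NetV.inn a (t+1)) = 1 :=
        le_antisymm (hcap _ _) h5
      exact ⟨a, Or.inr ⟨a, b, hadj, hab, hv, Or.inl rfl, hy1, h2, h6⟩⟩

lemma route_arrival {v w : V} {t : ℕ} (hr : Route G f v w t) :
    ∃ z, f z (NetV.inn w (t+1)) = 1 ∧
      ((z = NetV.out w t ∧ w = v) ∨ (∃ a b, z = NetV.gw' a b t ∧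
        f (NetV.out v t) (NetV.gw a b t) = 1)) := by
  rcases hr with ⟨h1, rfl⟩ | ⟨a, b, hadj, hab, hv, hw, h1, h2, h3⟩
  · exact ⟨NetV.out w t, h1, Or.inl ⟨rfl, rfl⟩⟩
  · exact ⟨NetV.gw' a b t, h3, Or.inr ⟨a, b, rfl, h1⟩⟩

lemma route_next
    (hf0 : ∀ x y, ¬ NetEdge G T x y → f x y = 0)
    (hcons : ∀ x, (∑ᶠ y, f y x)
      + Set.indicator {x | ∃ j, x = NetV.out (s j) 0} (fun _ => 1) x
    = (∑ᶠ y, f x y)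
      + Set.indicator {x | ∃ j, x = NetV.out (g j) T} (fun _ => 1) x)
    {v w : V} {t : ℕ} (hr : Route G f v w t) :
    1 ≤ ∑ᶠ y, f y (NetV.out w (t+1)) := by
  obtain ⟨z, hz, -⟩ := route_arrival hr
  have h1 : 1 ≤ ∑ᶠ y, f y (NetV.inn w (t+1)) := by
    calc 1 = f z (NetV.inn w (t+1)) := hz.symm
      _ ≤ _ := single_le_finsum'' _ (support_in_finite hf0 _) _
  have h2 : 1 ≤ f (NetV.inn w (t+1)) (NetV.out w (t+1)) := by
    rw [← flow_from_inn hf0]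
    rw [← cons_inn (s := s) (g := g) hcons]
    exact h1
  calc 1 ≤ f (NetV.inn w (t+1)) (NetV.out w (t+1)) := h2
    _ ≤ _ := single_le_finsum'' _ (support_in_finite hf0 _) _

lemma route_move {v w : V} {t : ℕ} (hr : Route G f v w t) : w = v ∨ G.Adj v w := by
  rcases hr with ⟨-, rfl⟩ | ⟨a, b, hadj, hab, hv, hw, -, -, -⟩
  · exact Or.inl rfl
  · rcases hv with rfl | rfl <;> rcases hw with rfl | rfl
    · exact Or.inl rfl
    · exact Or.inr hadj
    · exact Or.inr hadj.symm
    · exact Or.inl rfl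

lemma route_gadget {v w : V} {t : ℕ} (hr : Route G f v w t) (hne : w ≠ v) :
    f (NetV.out v t) (NetV.gw (min v w) (max v w) t) = 1 := by
  rcases hr with ⟨-, rfl⟩ | ⟨a, b, hadj, hab, hv, hw, h1, -, -⟩
  · exact absurd rfl hne
  · rcases hv with rfl | rfl <;> rcases hw with rfl | rfl
    · exact absurd rfl hne
    · rwa [min_eq_left hab.le, max_eq_right hab.le]
    · rwa [min_eq_right hab.le, max_eq_left hab.le]
    · exact absurd rfl hne

lemma route_ne
    (hcap : ∀ x y, f x y ≤ 1)
    (hf0 : ∀ x y, ¬ NetEdge G T x y → f x y = 0)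
    (hcons : ∀ x, (∑ᶠ y, f y x)
      + Set.indicator {x | ∃ j, x = NetV.out (s j) 0} (fun _ => 1) x
    = (∑ᶠ y, f x y)
      + Set.indicator {x | ∃ j, x = NetV.out (g j) T} (fun _ => 1) x)
    {v v' w w' : V} {t : ℕ} (hvv : v ≠ v')
    (hr : Route G f v w t) (hr' : Route G f v' w' t) : w ≠ w' := by
  rintro rfl
  obtain ⟨z, hz, hzc⟩ := route_arrival hr
  obtain ⟨z', hz', hzc'⟩ := route_arrival hr'
  have hinn := inn_flow_le_one (s := s) (g := g) hcap hf0 hcons w (t+1)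
  have hzz : z ≠ z' := by
    rintro rfl
    rcases hzc with ⟨rfl, rfl⟩ | ⟨a, b, rfl, hg1⟩
    · rcases hzc' with ⟨-, rfl⟩ | ⟨a, b, hab, -⟩
      · exact hvv rfl
      · exact absurd hab (by simp)
    · rcases hzc' with ⟨hab, rfl⟩ | ⟨a', b', hab, hg2⟩
      · exact absurd hab (by simp)
      · -- same gw' vertex, so same gadget; two distinct entries
        obtain ⟨h1, h2⟩ : a = a' ∧ b = b' := by
          have := hab
          simp only [NetV.gw'.injEq] at this
          exact ⟨this.1, this.2.1⟩
        have hgw := gw_flow_le_one (s := s) (g := g) hcap hf0 hcons a' b' t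
        have hp : f (NetV.out v t) (NetV.gw a' b' t) + f (NetV.out v' t) (NetV.gw a' b' t)
            ≤ ∑ᶠ y, f y (NetV.gw a' b' t) :=
          pair_le_finsum' _ (support_in_finite hf0 _) (by simp [hvv])
        rw [h1, h2] at hg1
        omega
  have hp : f z (NetV.inn w (t+1)) + f z' (NetV.inn w (t+1))
      ≤ ∑ᶠ y, f y (NetV.inn w (t+1)) :=
    pair_le_finsum' _ (support_in_finite hf0 _) hzz
  omega

lemma route_swap
    (hcap : ∀ x y, f x y ≤ 1)
    (hf0 : ∀ x y, ¬ NetEdge G T x y → f x y = 0)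
    (hcons : ∀ x, (∑ᶠ y, f y x)
      + Set.indicator {x | ∃ j, x = NetV.out (s j) 0} (fun _ => 1) x
    = (∑ᶠ y, f x y)
      + Set.indicator {x | ∃ j, x = NetV.out (g j) T} (fun _ => 1) x)
    {v v' : V} {t : ℕ} (hvv : v ≠ v')
    (hr : Route G f v v' t) (hr' : Route G f v' v t) : False := by
  have h1 := route_gadget hr hvv.symm
  have h2 := route_gadget hr' hvv
  rw [min_comm v' v, max_comm v' v] at h2
  have hgw := gw_flow_le_one (s := s) (g := g) hcap hf0 hcons (min v v') (max v v') t
  have hp : f (NetV.out v t) (NetV.gw (min v v') (max v v') t)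
      + f (NetV.out v' t) (NetV.gw (min v v') (max v v') t)
      ≤ ∑ᶠ y, f y (NetV.gw (min v v') (max v v') t) :=
    pair_le_finsum' _ (support_in_finite hf0 _) (by simp [hvv])
  omega

lemma out_T_target
    (hf0 : ∀ x y, ¬ NetEdge G T x y → f x y = 0)
    (hcons : ∀ x, (∑ᶠ y, f y x)
      + Set.indicator {x | ∃ j, x = NetV.out (s j) 0} (fun _ => 1) x
    = (∑ᶠ y, f x y)
      + Set.indicator {x | ∃ j, x = NetV.out (g j) T} (fun _ => 1) x)
    {v : V}
    (hocc : 1 ≤ (∑ᶠ y, f y (NetV.out v T))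
      + Set.indicator {x | ∃ j, x = NetV.out (s j) 0} (fun _ => 1) (NetV.out v T)) :
    ∃ j, v = g j := by
  have hcx := hcons (NetV.out v T)
  rw [flow_from_out_ge hf0 le_rfl] at hcx
  by_contra hm
  rw [Set.indicator_of_notMem (show (NetV.out v T : NetV V)
      ∉ {x | ∃ j, x = NetV.out (g j) T} by
    simp only [Set.mem_setOf_eq, NetV.out.injEq, not_exists, not_and]
    intro j hj _
    exact hm ⟨j, hj⟩)] at hcx
  omega

lemma trace_occ
    (hcap : ∀ x y, f x y ≤ 1)
    (hf0 : ∀ x y, ¬ NetEdge G T x y → f x y = 0)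
    (hcons : ∀ x, (∑ᶠ y, f y x)
      + Set.indicator {x | ∃ j, x = NetV.out (s j) 0} (fun _ => 1) x
    = (∑ᶠ y, f x y)
      + Set.indicator {x | ∃ j, x = NetV.out (g j) T} (fun _ => 1) x)
    (j : Fin k) : ∀ t, t ≤ T →
    1 ≤ (∑ᶠ y, f y (NetV.out (trace G f s j t) t))
      + Set.indicator {x | ∃ j, x = NetV.out (s j) 0} (fun _ => 1)
        (NetV.out (trace G f s j t) t) := by
  intro t
  induction t with
  | zero =>
    intro _
    rw [Set.indicator_of_mem (by exact ⟨j, rfl⟩)]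
    omega
  | succ t ih =>
    intro ht
    have ht' : t < T := by omega
    have hocc := ih (le_of_lt ht')
    obtain ⟨w, hw⟩ := route_exists (s := s) (g := g) hcap hf0 hcons ht' hocc
    have hroute : Route G f (trace G f s j t) (trace G f s j (t+1)) t := by
      show Route G f _ (nxt G f (trace G f s j t) t) t
      rw [nxt, dif_pos ⟨w, hw⟩]
      exact Exists.choose_spec (⟨w, hw⟩ : ∃ w, Route G f (trace G f s j t) w t)
    have := route_next (s := s) (g := g) hf0 hcons hroute
    omega

lemma trace_route
    (hcap : ∀ x y, f x y ≤ 1)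
    (hf0 : ∀ x y, ¬ NetEdge G T x y → f x y = 0)
    (hcons : ∀ x, (∑ᶠ y, f y x)
      + Set.indicator {x | ∃ j, x = NetV.out (s j) 0} (fun _ => 1) x
    = (∑ᶠ y, f x y)
      + Set.indicator {x | ∃ j, x = NetV.out (g j) T} (fun _ => 1) x)
    (j : Fin k) {t : ℕ} (ht : t < T) :
    Route G f (trace G f s j t) (trace G f s j (t+1)) t := by
  have hocc := trace_occ (g := g) hcap hf0 hcons j t (le_of_lt ht)
  obtain ⟨w, hw⟩ := route_exists (s := s) (g := g) hcap hf0 hcons ht hocc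
  show Route G f _ (nxt G f (trace G f s j t) t) t
  rw [nxt, dif_pos ⟨w, hw⟩]
  exact Exists.choose_spec (⟨w, hw⟩ : ∃ w, Route G f (trace G f s j t) w t)

lemma trace_disjoint
    (hcap : ∀ x y, f x y ≤ 1)
    (hf0 : ∀ x y, ¬ NetEdge G T x y → f x y = 0)
    (hcons : ∀ x, (∑ᶠ y, f y x)
      + Set.indicator {x | ∃ j, x = NetV.out (s j) 0} (fun _ => 1) x
    = (∑ᶠ y, f x y)
      + Set.indicator {x | ∃ j, x = NetV.out (g j) T} (fun _ => 1) x)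
    {j j' : Fin k} (hjj : j ≠ j') :
    ∀ t, t ≤ T → trace G f s j t ≠ trace G f s j' t := by
  intro t
  induction t with
  | zero =>
    intro _
    exact fun h => hjj (s.injective h)
  | succ t ih =>
    intro ht
    have ht' : t < T := by omega
    exact route_ne (s := s) (g := g) hcap hf0 hcons (ih (le_of_lt ht'))
      (trace_route (g := g) hcap hf0 hcons j ht')
      (trace_route (g := g) hcap hf0 hcons j' ht')

lemma forward
    (hcap : ∀ x y, f x y ≤ 1)
    (hf0 : ∀ x y, ¬ NetEdge G T x y → f x y = 0)
    (hcons : ∀ x, (∑ᶠ y, f y x)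
      + Set.indicator {x | ∃ j, x = NetV.out (s j) 0} (fun _ => 1) x
    = (∑ᶠ y, f x y)
      + Set.indicator {x | ∃ j, x = NetV.out (g j) T} (fun _ => 1) x) :
    ∃ (σ : Equiv.Perm (Fin k)) (l : Fin k → ℕ → V),
      (∀ j, l j 0 = s j) ∧
      (∀ j, ∀ t ≥ T, l j t = g (σ j)) ∧
      (∀ j t, l j t = l j (t + 1) ∨ G.Adj (l j t) (l j (t + 1))) ∧
      (∀ j j' t, j ≠ j' → l j t ≠ l j' t) ∧
      (∀ j j' t, j ≠ j' → ¬(l j t = l j' (t + 1) ∧ l j' t = l j (t + 1))) := by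
  have htarg : ∀ j : Fin k, ∃ j', trace G f s j T = g j' := fun j =>
    out_T_target hf0 hcons (trace_occ hcap hf0 hcons j T le_rfl)
  choose σ0 hσ0 using htarg
  have hinj : Function.Injective σ0 := by
    intro j j' h
    by_contra hne
    exact trace_disjoint hcap hf0 hcons hne T le_rfl (by rw [hσ0 j, hσ0 j', h])
  refine ⟨Equiv.ofBijective σ0 (Finite.injective_iff_bijective.mp hinj),
    fun j t => trace G f s j (min t T), fun j => ?_, fun j t ht => ?_, fun j t => ?_,
    fun j j' t hne => ?_, fun j j' t hne => ?_⟩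
  · show trace G f s j (min 0 T) = s j
    rw [Nat.zero_min]
    simp [trace]
  · show trace G f s j (min t T) = g _
    rw [min_eq_right ht, hσ0 j]
    rfl
  · rcases lt_or_ge t T with ht | ht
    · have e1 : min t T = t := min_eq_left ht.le
      have e2 : min (t+1) T = t+1 := min_eq_left ht
      show trace G f s j (min t T) = trace G f s j (min (t+1) T) ∨
        G.Adj (trace G f s j (min t T)) (trace G f s j (min (t+1) T))
      rw [e1, e2]
      rcases route_move (trace_route hcap hf0 hcons j ht) with h | h
      · exact Or.inl h.symm
      · exact Or.inr h
    · have e1 : min t T = T := min_eq_right ht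
      have e2 : min (t+1) T = T := min_eq_right (by omega)
      show trace G f s j (min t T) = trace G f s j (min (t+1) T) ∨ _
      rw [e1, e2]
      exact Or.inl rfl
  · exact trace_disjoint hcap hf0 hcons hne (min t T) (min_le_right t T)
  · rintro ⟨h1, h2⟩
    rcases lt_or_ge t T with ht | ht
    · have e1 : min t T = t := min_eq_left ht.le
      have e2 : min (t+1) T = t+1 := min_eq_left ht
      simp only [e1, e2] at h1 h2
      have hvv := trace_disjoint hcap hf0 hcons hne t ht.le
      have r := trace_route hcap hf0 hcons j ht
      have r' := trace_route hcap hf0 hcons j' ht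
      rw [← h2] at r
      rw [← h1] at r'
      exact route_swap hcap hf0 hcons hvv r r'
    · have e1 : min t T = T := min_eq_right ht
      have e2 : min (t+1) T = T := min_eq_right (by omega)
      simp only [e1, e2] at h1
      exact trace_disjoint hcap hf0 hcons hne T le_rfl h1

end FlowLemmas

end Forward

section Backward

variable {k : ℕ} {s g : Fin k ↪ V}

variable (T) in
/-- Agent `j`'s motion uses the network edge `(x, y)`. -/
def UsesEdge (l : Fin k → ℕ → V) (x y : NetV V) : Prop :=
  (∃ j t, t < T ∧ l j (t+1) = l j t ∧ x = NetV.out (l j t) t ∧ y = NetV.inn (l j t) (t+1)) ∨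
  (∃ j t, 1 ≤ t ∧ t ≤ T ∧ x = NetV.inn (l j t) t ∧ y = NetV.out (l j t) t) ∨
  (∃ j t, t < T ∧ l j t ≠ l j (t+1) ∧
    ((x = NetV.out (l j t) t ∧
        y = NetV.gw (min (l j t) (l j (t+1))) (max (l j t) (l j (t+1))) t) ∨
     (x = NetV.gw (min (l j t) (l j (t+1))) (max (l j t) (l j (t+1))) t ∧
        y = NetV.gw' (min (l j t) (l j (t+1))) (max (l j t) (l j (t+1))) t) ∨
     (x = NetV.gw' (min (l j t) (l j (t+1))) (max (l j t) (l j (t+1))) t ∧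
        y = NetV.inn (l j (t+1)) (t+1))))

variable (T) in
noncomputable def pathFlow (l : Fin k → ℕ → V) : NetV V → NetV V → ℕ := fun x y =>
  @ite _ (UsesEdge T l x y) (Classical.propDecidable _) 1 0

variable {l : Fin k → ℕ → V} {σ : Equiv.Perm (Fin k)}

lemma pf_le_one (x y : NetV V) : pathFlow T l x y ≤ 1 := by
  rw [pathFlow]
  split <;> omega

lemma pf_pos {x y : NetV V} (h : UsesEdge T l x y) : pathFlow T l x y = 1 := by
  rw [pathFlow, if_pos h]

lemma pf_zero {x y : NetV V} (h : ¬ UsesEdge T l x y) : pathFlow T l x y = 0 := by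
  rw [pathFlow, if_neg h]

lemma pf_one_iff {x y : NetV V} : pathFlow T l x y = 1 ↔ UsesEdge T l x y := by
  rw [pathFlow]
  split <;> simp_all

lemma pf_ne_zero {x y : NetV V} (h : pathFlow T l x y ≠ 0) : UsesEdge T l x y := by
  rw [pathFlow] at h
  by_contra hc
  rw [if_neg hc] at h
  exact h rfl

/-- The constructed flow vanishes outside network edges. -/
lemma pathFlow_edge (hmove : ∀ j t, l j t = l j (t + 1) ∨ G.Adj (l j t) (l j (t + 1))) :
    ∀ x y, ¬ NetEdge G T x y → pathFlow T l x y = 0 := by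
  intro x y h
  refine pf_zero fun hc => h ?_
  rcases hc with ⟨j, t, ht, hw, hx, hy⟩ | ⟨j, t, h1, h2, hx, hy⟩ | ⟨j, t, ht, hne, hsub⟩
  · exact Or.inl ⟨l j t, t, ht, hx, hy⟩
  · exact Or.inr (Or.inl ⟨l j t, t, h1, h2, hx, hy⟩)
  · have hadj : G.Adj (l j t) (l j (t+1)) := (hmove j t).resolve_left hne
    refine Or.inr (Or.inr ?_)
    rcases le_total (l j t) (l j (t+1)) with hle | hle
    · have e1 : min (l j t) (l j (t+1)) = l j t := min_eq_left hle
      have e2 : max (l j t) (l j (t+1)) = l j (t+1) := max_eq_right hle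
      rw [e1, e2] at hsub
      exact ⟨l j t, l j (t+1), t, hadj, lt_of_le_of_ne hle hne, ht, by tauto⟩
    · have e1 : min (l j t) (l j (t+1)) = l j (t+1) := min_eq_right hle
      have e2 : max (l j t) (l j (t+1)) = l j t := max_eq_left hle
      rw [e1, e2] at hsub
      exact ⟨l j (t+1), l j t, t, hadj.symm, lt_of_le_of_ne hle (Ne.symm hne), ht, by tauto⟩

section Cons

variable (hvert : ∀ j j' t, j ≠ j' → l j t ≠ l j' t)
variable (hswap : ∀ j j' t, j ≠ j' → ¬(l j t = l j' (t + 1) ∧ l j' t = l j (t + 1)))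

lemma path_uniq (hvert : ∀ j j' t, j ≠ j' → l j t ≠ l j' t)
    {j j' : Fin k} {t : ℕ} (h : l j t = l j' t) : j = j' := by
  by_contra hne
  exact hvert j j' t hne h

lemma gad_uniq (hvert : ∀ j j' t, j ≠ j' → l j t ≠ l j' t)
    (hswap : ∀ j j' t, j ≠ j' → ¬(l j t = l j' (t + 1) ∧ l j' t = l j (t + 1)))
    {j j' : Fin k} {t : ℕ}
    (hmin : min (l j t) (l j (t+1)) = min (l j' t) (l j' (t+1)))
    (hmax : max (l j t) (l j (t+1)) = max (l j' t) (l j' (t+1))) : j = j' := by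
  rcases le_total (l j t) (l j (t+1)) with h1 | h1 <;>
    rcases le_total (l j' t) (l j' (t+1)) with h2 | h2
  · rw [min_eq_left h1, min_eq_left h2] at hmin
    exact path_uniq hvert hmin
  · rw [min_eq_left h1, min_eq_right h2] at hmin
    rw [max_eq_right h1, max_eq_left h2] at hmax
    by_contra hne
    exact hswap j j' t hne ⟨hmin, hmax.symm⟩
  · rw [min_eq_right h1, min_eq_left h2] at hmin
    rw [max_eq_left h1, max_eq_right h2] at hmax
    by_contra hne
    exact hswap j j' t hne ⟨hmax, hmin.symm⟩
  · rw [max_eq_left h1, max_eq_left h2] at hmax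
    exact path_uniq hvert hmax


-- ### sums at `inn` vertices

lemma sout_inn (v : V) (t : ℕ) :
    ∑ᶠ z, pathFlow T l (NetV.inn v t) z = pathFlow T l (NetV.inn v t) (NetV.out v t) := by
  refine finsum_eq_single _ _ fun z hz => pf_zero fun hc => hz ?_
  rcases hc with ⟨j₁,t₁,ht₁,hw₁,hx₁,hy₁⟩ | ⟨j₁,t₁,h1₁,h2₁,hx₁,hy₁⟩ |
    ⟨j₁,t₁,ht₁,hne₁,(⟨hx₁,hy₁⟩|⟨hx₁,hy₁⟩|⟨hx₁,hy₁⟩)⟩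
  · exact absurd hx₁ (by simp)
  · obtain ⟨e1, e2⟩ := NetV.inn.inj hx₁
    rw [hy₁, ← e1, ← e2]
  · exact absurd hx₁ (by simp)
  · exact absurd hx₁ (by simp)
  · exact absurd hx₁ (by simp)

lemma pf_inn_out_iff {v : V} {t : ℕ} :
    pathFlow T l (NetV.inn v t) (NetV.out v t) = 1 ↔ (1 ≤ t ∧ t ≤ T ∧ ∃ j, l j t = v) := by
  rw [pf_one_iff]
  constructor
  · rintro (⟨j₁,t₁,ht₁,hw₁,hx₁,hy₁⟩ | ⟨j₁,t₁,h1₁,h2₁,hx₁,hy₁⟩ |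
      ⟨j₁,t₁,ht₁,hne₁,(⟨hx₁,hy₁⟩|⟨hx₁,hy₁⟩|⟨hx₁,hy₁⟩)⟩)
    · exact absurd hx₁ (by simp)
    · obtain ⟨e1, e2⟩ := NetV.inn.inj hx₁
      exact ⟨by omega, by omega, j₁, by rw [e2, ← e1]⟩
    · exact absurd hx₁ (by simp)
    · exact absurd hx₁ (by simp)
    · exact absurd hx₁ (by simp)
  · rintro ⟨h1, h2, j, hj⟩
    exact Or.inr (Or.inl ⟨j, t, h1, h2, by rw [hj], by rw [hj]⟩)

lemma sin_inn_pos (hvert : ∀ j j' t, j ≠ j' → l j t ≠ l j' t) {v : V} {t' : ℕ}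
    (h2 : t' + 1 ≤ T) {j : Fin k} (hj : l j (t'+1) = v) :
    ∑ᶠ z, pathFlow T l z (NetV.inn v (t'+1)) = 1 := by
  by_cases hw : l j (t'+1) = l j t'
  · have key : pathFlow T l (NetV.out v t') (NetV.inn v (t'+1)) = 1 := by
      refine pf_pos (Or.inl ⟨j, t', by omega, hw, ?_, ?_⟩)
      · rw [hw.symm.trans hj]
      · rw [hw.symm.trans hj]
    refine (finsum_eq_single _ (NetV.out v t') fun z hz => pf_zero fun hc => hz ?_).trans key
    rcases hc with ⟨j₁,t₁,ht₁,hw₁,hx₁,hy₁⟩ | ⟨j₁,t₁,h1₁,h2₁,hx₁,hy₁⟩ |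
      ⟨j₁,t₁,ht₁,hne₁,(⟨hx₁,hy₁⟩|⟨hx₁,hy₁⟩|⟨hx₁,hy₁⟩)⟩
    · obtain ⟨e1, e2⟩ := NetV.inn.inj hy₁
      obtain rfl : t₁ = t' := by omega
      obtain rfl : j₁ = j := path_uniq hvert (show l j₁ (t₁+1) = l j (t₁+1) by rw [hw₁, ← e1, hj])
      rw [hx₁, ← e1]
    · exact absurd hy₁ (by simp)
    · exact absurd hy₁ (by simp)
    · exact absurd hy₁ (by simp)
    · obtain ⟨e1, e2⟩ := NetV.inn.inj hy₁
      obtain rfl : t₁ = t' := by omega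
      obtain rfl : j₁ = j := path_uniq hvert (show l j₁ (t₁+1) = l j (t₁+1) by rw [← e1, hj])
      exact absurd hw.symm hne₁
  · have hne' : l j t' ≠ l j (t'+1) := fun h => hw h.symm
    have key : pathFlow T l
        (NetV.gw' (min (l j t') (l j (t'+1))) (max (l j t') (l j (t'+1))) t')
        (NetV.inn v (t'+1)) = 1 := by
      refine pf_pos (Or.inr (Or.inr ⟨j, t', by omega, hne', Or.inr (Or.inr ⟨rfl, ?_⟩)⟩))
      rw [hj]
    refine (finsum_eq_single _ _ fun z hz => pf_zero fun hc => hz ?_).trans key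
    rcases hc with ⟨j₁,t₁,ht₁,hw₁,hx₁,hy₁⟩ | ⟨j₁,t₁,h1₁,h2₁,hx₁,hy₁⟩ |
      ⟨j₁,t₁,ht₁,hne₁,(⟨hx₁,hy₁⟩|⟨hx₁,hy₁⟩|⟨hx₁,hy₁⟩)⟩
    · obtain ⟨e1, e2⟩ := NetV.inn.inj hy₁
      obtain rfl : t₁ = t' := by omega
      obtain rfl : j₁ = j := path_uniq hvert (show l j₁ (t₁+1) = l j (t₁+1) by rw [hw₁, ← e1, hj])
      exact absurd hw₁ hw
    · exact absurd hy₁ (by simp)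
    · exact absurd hy₁ (by simp)
    · exact absurd hy₁ (by simp)
    · obtain ⟨e1, e2⟩ := NetV.inn.inj hy₁
      obtain rfl : t₁ = t' := by omega
      obtain rfl : j₁ = j := path_uniq hvert (show l j₁ (t₁+1) = l j (t₁+1) by rw [← e1, hj])
      exact hx₁

lemma sin_inn_neg {v : V} {t : ℕ} (h : ¬(1 ≤ t ∧ t ≤ T ∧ ∃ j, l j t = v)) :
    ∑ᶠ z, pathFlow T l z (NetV.inn v t) = 0 := by
  refine finsum_eq_zero_of_forall_eq_zero fun z => pf_zero fun hc => h ?_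
  rcases hc with ⟨j₁,t₁,ht₁,hw₁,hx₁,hy₁⟩ | ⟨j₁,t₁,h1₁,h2₁,hx₁,hy₁⟩ |
    ⟨j₁,t₁,ht₁,hne₁,(⟨hx₁,hy₁⟩|⟨hx₁,hy₁⟩|⟨hx₁,hy₁⟩)⟩
  · obtain ⟨e1, e2⟩ := NetV.inn.inj hy₁
    exact ⟨by omega, by omega, j₁, by rw [e2, hw₁, ← e1]⟩
  · exact absurd hy₁ (by simp)
  · exact absurd hy₁ (by simp)
  · exact absurd hy₁ (by simp)
  · obtain ⟨e1, e2⟩ := NetV.inn.inj hy₁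
    exact ⟨by omega, by omega, j₁, by rw [e2, ← e1]⟩

-- ### sums at `out` vertices

lemma sin_out (v : V) (t : ℕ) :
    ∑ᶠ z, pathFlow T l z (NetV.out v t) = pathFlow T l (NetV.inn v t) (NetV.out v t) := by
  refine finsum_eq_single _ _ fun z hz => pf_zero fun hc => hz ?_
  rcases hc with ⟨j₁,t₁,ht₁,hw₁,hx₁,hy₁⟩ | ⟨j₁,t₁,h1₁,h2₁,hx₁,hy₁⟩ |
    ⟨j₁,t₁,ht₁,hne₁,(⟨hx₁,hy₁⟩|⟨hx₁,hy₁⟩|⟨hx₁,hy₁⟩)⟩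
  · exact absurd hy₁ (by simp)
  · obtain ⟨e1, e2⟩ := NetV.out.inj hy₁
    rw [hx₁, ← e1, ← e2]
  · exact absurd hy₁ (by simp)
  · exact absurd hy₁ (by simp)
  · exact absurd hy₁ (by simp)

lemma sout_out_pos (hvert : ∀ j j' t, j ≠ j' → l j t ≠ l j' t) {v : V} {t : ℕ}
    (ht : t < T) {j : Fin k} (hj : l j t = v) :
    ∑ᶠ z, pathFlow T l (NetV.out v t) z = 1 := by
  by_cases hw : l j (t+1) = l j t
  · have key : pathFlow T l (NetV.out v t) (NetV.inn v (t+1)) = 1 :=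
      pf_pos (Or.inl ⟨j, t, ht, hw, by rw [hj], by rw [hj]⟩)
    refine (finsum_eq_single _ (NetV.inn v (t+1)) fun z hz => pf_zero fun hc => hz ?_).trans key
    rcases hc with ⟨j₁,t₁,ht₁,hw₁,hx₁,hy₁⟩ | ⟨j₁,t₁,h1₁,h2₁,hx₁,hy₁⟩ |
      ⟨j₁,t₁,ht₁,hne₁,(⟨hx₁,hy₁⟩|⟨hx₁,hy₁⟩|⟨hx₁,hy₁⟩)⟩
    · obtain ⟨e1, e2⟩ := NetV.out.inj hx₁
      obtain rfl : t₁ = t := e2.symm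
      obtain rfl : j₁ = j := path_uniq hvert (show l j₁ t₁ = l j t₁ by rw [← e1, hj])
      rw [hy₁, ← e1]
    · exact absurd hx₁ (by simp)
    · obtain ⟨e1, e2⟩ := NetV.out.inj hx₁
      obtain rfl : t₁ = t := e2.symm
      obtain rfl : j₁ = j := path_uniq hvert (show l j₁ t₁ = l j t₁ by rw [← e1, hj])
      exact absurd hw.symm hne₁
    · exact absurd hx₁ (by simp)
    · exact absurd hx₁ (by simp)
  · have hne' : l j t ≠ l j (t+1) := fun h => hw h.symm
    have key : pathFlow T l (NetV.out v t)
        (NetV.gw (min (l j t) (l j (t+1))) (max (l j t) (l j (t+1))) t) = 1 :=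
      pf_pos (Or.inr (Or.inr ⟨j, t, ht, hne', Or.inl ⟨by rw [hj], rfl⟩⟩))
    refine (finsum_eq_single _ _ fun z hz => pf_zero fun hc => hz ?_).trans key
    rcases hc with ⟨j₁,t₁,ht₁,hw₁,hx₁,hy₁⟩ | ⟨j₁,t₁,h1₁,h2₁,hx₁,hy₁⟩ |
      ⟨j₁,t₁,ht₁,hne₁,(⟨hx₁,hy₁⟩|⟨hx₁,hy₁⟩|⟨hx₁,hy₁⟩)⟩
    · obtain ⟨e1, e2⟩ := NetV.out.inj hx₁
      obtain rfl : t₁ = t := e2.symm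
      obtain rfl : j₁ = j := path_uniq hvert (show l j₁ t₁ = l j t₁ by rw [← e1, hj])
      exact absurd hw₁ hw
    · exact absurd hx₁ (by simp)
    · obtain ⟨e1, e2⟩ := NetV.out.inj hx₁
      obtain rfl : t₁ = t := e2.symm
      obtain rfl : j₁ = j := path_uniq hvert (show l j₁ t₁ = l j t₁ by rw [← e1, hj])
      exact hy₁
    · exact absurd hx₁ (by simp)
    · exact absurd hx₁ (by simp)

lemma sout_out_neg {v : V} {t : ℕ} (h : ¬(t < T ∧ ∃ j, l j t = v)) :
    ∑ᶠ z, pathFlow T l (NetV.out v t) z = 0 := by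
  refine finsum_eq_zero_of_forall_eq_zero fun z => pf_zero fun hc => h ?_
  rcases hc with ⟨j₁,t₁,ht₁,hw₁,hx₁,hy₁⟩ | ⟨j₁,t₁,h1₁,h2₁,hx₁,hy₁⟩ |
    ⟨j₁,t₁,ht₁,hne₁,(⟨hx₁,hy₁⟩|⟨hx₁,hy₁⟩|⟨hx₁,hy₁⟩)⟩
  · obtain ⟨e1, e2⟩ := NetV.out.inj hx₁
    exact ⟨by omega, j₁, by rw [e2, ← e1]⟩
  · exact absurd hx₁ (by simp)
  · obtain ⟨e1, e2⟩ := NetV.out.inj hx₁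
    exact ⟨by omega, j₁, by rw [e2, ← e1]⟩
  · exact absurd hx₁ (by simp)
  · exact absurd hx₁ (by simp)

-- ### sums at gadget vertices

lemma sin_gw_pos (hvert : ∀ j j' t, j ≠ j' → l j t ≠ l j' t)
    (hswap : ∀ j j' t, j ≠ j' → ¬(l j t = l j' (t + 1) ∧ l j' t = l j (t + 1)))
    {a b : V} {t : ℕ} {j : Fin k} (ht : t < T) (hne : l j t ≠ l j (t+1))
    (hmin : min (l j t) (l j (t+1)) = a) (hmax : max (l j t) (l j (t+1)) = b) :
    ∑ᶠ z, pathFlow T l z (NetV.gw a b t) = 1 := by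
  have key : pathFlow T l (NetV.out (l j t) t) (NetV.gw a b t) = 1 :=
    pf_pos (Or.inr (Or.inr ⟨j, t, ht, hne, Or.inl ⟨rfl, by rw [hmin, hmax]⟩⟩))
  refine (finsum_eq_single _ (NetV.out (l j t) t) fun z hz => pf_zero fun hc => hz ?_).trans key
  rcases hc with ⟨j₁,t₁,ht₁,hw₁,hx₁,hy₁⟩ | ⟨j₁,t₁,h1₁,h2₁,hx₁,hy₁⟩ |
    ⟨j₁,t₁,ht₁,hne₁,(⟨hx₁,hy₁⟩|⟨hx₁,hy₁⟩|⟨hx₁,hy₁⟩)⟩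
  · exact absurd hy₁ (by simp)
  · exact absurd hy₁ (by simp)
  · obtain ⟨e1, e2, e3⟩ := NetV.gw.inj hy₁
    obtain rfl : t₁ = t := e3.symm
    obtain rfl : j₁ = j := gad_uniq hvert hswap (by rw [← e1, hmin]) (by rw [← e2, hmax])
    exact hx₁
  · exact absurd hy₁ (by simp)
  · exact absurd hy₁ (by simp)

lemma sin_gw_neg {a b : V} {t : ℕ}
    (h : ¬∃ j, t < T ∧ l j t ≠ l j (t+1) ∧ min (l j t) (l j (t+1)) = a
      ∧ max (l j t) (l j (t+1)) = b) :
    ∑ᶠ z, pathFlow T l z (NetV.gw a b t) = 0 := by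
  refine finsum_eq_zero_of_forall_eq_zero fun z => pf_zero fun hc => h ?_
  rcases hc with ⟨j₁,t₁,ht₁,hw₁,hx₁,hy₁⟩ | ⟨j₁,t₁,h1₁,h2₁,hx₁,hy₁⟩ |
    ⟨j₁,t₁,ht₁,hne₁,(⟨hx₁,hy₁⟩|⟨hx₁,hy₁⟩|⟨hx₁,hy₁⟩)⟩
  · exact absurd hy₁ (by simp)
  · exact absurd hy₁ (by simp)
  · obtain ⟨e1, e2, e3⟩ := NetV.gw.inj hy₁
    obtain rfl : t₁ = t := e3.symm
    exact ⟨j₁, ht₁, hne₁, e1.symm, e2.symm⟩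
  · exact absurd hy₁ (by simp)
  · exact absurd hy₁ (by simp)

lemma sout_gw (a b : V) (t : ℕ) :
    ∑ᶠ z, pathFlow T l (NetV.gw a b t) z = pathFlow T l (NetV.gw a b t) (NetV.gw' a b t) := by
  refine finsum_eq_single _ _ fun z hz => pf_zero fun hc => hz ?_
  rcases hc with ⟨j₁,t₁,ht₁,hw₁,hx₁,hy₁⟩ | ⟨j₁,t₁,h1₁,h2₁,hx₁,hy₁⟩ |
    ⟨j₁,t₁,ht₁,hne₁,(⟨hx₁,hy₁⟩|⟨hx₁,hy₁⟩|⟨hx₁,hy₁⟩)⟩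
  · exact absurd hx₁ (by simp)
  · exact absurd hx₁ (by simp)
  · exact absurd hx₁ (by simp)
  · obtain ⟨e1, e2, e3⟩ := NetV.gw.inj hx₁
    rw [hy₁, ← e1, ← e2, ← e3]
  · exact absurd hx₁ (by simp)

lemma pf_gw_iff {a b : V} {t : ℕ} :
    pathFlow T l (NetV.gw a b t) (NetV.gw' a b t) = 1 ↔
    ∃ j, t < T ∧ l j t ≠ l j (t+1) ∧ min (l j t) (l j (t+1)) = a
      ∧ max (l j t) (l j (t+1)) = b := by
  rw [pf_one_iff]
  constructor
  · rintro (⟨j₁,t₁,ht₁,hw₁,hx₁,hy₁⟩ | ⟨j₁,t₁,h1₁,h2₁,hx₁,hy₁⟩ |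
      ⟨j₁,t₁,ht₁,hne₁,(⟨hx₁,hy₁⟩|⟨hx₁,hy₁⟩|⟨hx₁,hy₁⟩)⟩)
    · exact absurd hx₁ (by simp)
    · exact absurd hx₁ (by simp)
    · exact absurd hx₁ (by simp)
    · obtain ⟨e1, e2, e3⟩ := NetV.gw.inj hx₁
      obtain rfl : t₁ = t := e3.symm
      exact ⟨j₁, ht₁, hne₁, e1.symm, e2.symm⟩
    · exact absurd hx₁ (by simp)
  · rintro ⟨j, ht, hne, hmin, hmax⟩
    exact Or.inr (Or.inr ⟨j, t, ht, hne,
      Or.inr (Or.inl ⟨by rw [hmin, hmax], by rw [hmin, hmax]⟩)⟩)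

lemma sin_gw' (a b : V) (t : ℕ) :
    ∑ᶠ z, pathFlow T l z (NetV.gw' a b t) = pathFlow T l (NetV.gw a b t) (NetV.gw' a b t) := by
  refine finsum_eq_single _ _ fun z hz => pf_zero fun hc => hz ?_
  rcases hc with ⟨j₁,t₁,ht₁,hw₁,hx₁,hy₁⟩ | ⟨j₁,t₁,h1₁,h2₁,hx₁,hy₁⟩ |
    ⟨j₁,t₁,ht₁,hne₁,(⟨hx₁,hy₁⟩|⟨hx₁,hy₁⟩|⟨hx₁,hy₁⟩)⟩
  · exact absurd hy₁ (by simp)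
  · exact absurd hy₁ (by simp)
  · exact absurd hy₁ (by simp)
  · obtain ⟨e1, e2, e3⟩ := NetV.gw'.inj hy₁
    rw [hx₁, ← e1, ← e2, ← e3]
  · exact absurd hy₁ (by simp)

lemma sout_gw'_pos (hvert : ∀ j j' t, j ≠ j' → l j t ≠ l j' t)
    (hswap : ∀ j j' t, j ≠ j' → ¬(l j t = l j' (t + 1) ∧ l j' t = l j (t + 1)))
    {a b : V} {t : ℕ} {j : Fin k} (ht : t < T) (hne : l j t ≠ l j (t+1))
    (hmin : min (l j t) (l j (t+1)) = a) (hmax : max (l j t) (l j (t+1)) = b) :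
    ∑ᶠ z, pathFlow T l (NetV.gw' a b t) z = 1 := by
  have key : pathFlow T l (NetV.gw' a b t) (NetV.inn (l j (t+1)) (t+1)) = 1 :=
    pf_pos (Or.inr (Or.inr ⟨j, t, ht, hne, Or.inr (Or.inr ⟨by rw [hmin, hmax], rfl⟩)⟩))
  refine (finsum_eq_single _ (NetV.inn (l j (t+1)) (t+1))
    fun z hz => pf_zero fun hc => hz ?_).trans key
  rcases hc with ⟨j₁,t₁,ht₁,hw₁,hx₁,hy₁⟩ | ⟨j₁,t₁,h1₁,h2₁,hx₁,hy₁⟩ |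
    ⟨j₁,t₁,ht₁,hne₁,(⟨hx₁,hy₁⟩|⟨hx₁,hy₁⟩|⟨hx₁,hy₁⟩)⟩
  · exact absurd hx₁ (by simp)
  · exact absurd hx₁ (by simp)
  · exact absurd hx₁ (by simp)
  · exact absurd hx₁ (by simp)
  · obtain ⟨e1, e2, e3⟩ := NetV.gw'.inj hx₁
    obtain rfl : t₁ = t := e3.symm
    obtain rfl : j₁ = j := gad_uniq hvert hswap (by rw [← e1, hmin]) (by rw [← e2, hmax])
    exact hy₁

lemma sout_gw'_neg {a b : V} {t : ℕ}
    (h : ¬∃ j, t < T ∧ l j t ≠ l j (t+1) ∧ min (l j t) (l j (t+1)) = a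
      ∧ max (l j t) (l j (t+1)) = b) :
    ∑ᶠ z, pathFlow T l (NetV.gw' a b t) z = 0 := by
  refine finsum_eq_zero_of_forall_eq_zero fun z => pf_zero fun hc => h ?_
  rcases hc with ⟨j₁,t₁,ht₁,hw₁,hx₁,hy₁⟩ | ⟨j₁,t₁,h1₁,h2₁,hx₁,hy₁⟩ |
    ⟨j₁,t₁,ht₁,hne₁,(⟨hx₁,hy₁⟩|⟨hx₁,hy₁⟩|⟨hx₁,hy₁⟩)⟩
  · exact absurd hx₁ (by simp)
  · exact absurd hx₁ (by simp)
  · exact absurd hx₁ (by simp)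
  · exact absurd hx₁ (by simp)
  · obtain ⟨e1, e2, e3⟩ := NetV.gw'.inj hx₁
    obtain rfl : t₁ = t := e3.symm
    exact ⟨j₁, ht₁, hne₁, e1.symm, e2.symm⟩

lemma pathFlow_cons {σ : Equiv.Perm (Fin k)}
    (hl0 : ∀ j, l j 0 = s j)
    (hlT : ∀ j, ∀ t ≥ T, l j t = g (σ j))
    (hvert : ∀ j j' t, j ≠ j' → l j t ≠ l j' t)
    (hswap : ∀ j j' t, j ≠ j' → ¬(l j t = l j' (t + 1) ∧ l j' t = l j (t + 1))) :
    ∀ x, (∑ᶠ y, pathFlow T l y x)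
        + Set.indicator {x | ∃ j, x = NetV.out (s j) 0} (fun _ => 1) x
      = (∑ᶠ y, pathFlow T l x y)
        + Set.indicator {x | ∃ j, x = NetV.out (g j) T} (fun _ => 1) x := by
  intro x
  cases x with
  | inn v t =>
    rw [Set.indicator_of_notMem (by simp), Set.indicator_of_notMem (by simp), sout_inn]
    by_cases hb : 1 ≤ t ∧ t ≤ T ∧ ∃ j, l j t = v
    · obtain ⟨h1, h2, j, hj⟩ := hb
      obtain ⟨t', rfl⟩ : ∃ t', t = t' + 1 := ⟨t - 1, by omega⟩
      rw [sin_inn_pos hvert h2 hj, pf_inn_out_iff.mpr ⟨h1, h2, j, hj⟩]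
    · rw [sin_inn_neg hb]
      have hle := pf_le_one (T := T) (l := l) (NetV.inn v t) (NetV.out v t)
      have h1 : pathFlow T l (NetV.inn v t) (NetV.out v t) ≠ 1 :=
        fun h => hb (pf_inn_out_iff.mp h)
      omega
  | out v t =>
    rw [sin_out]
    by_cases hocc : ∃ j, l j t = v
    · obtain ⟨j, hj⟩ := hocc
      rcases Nat.lt_trichotomy t T with htT | heq | htT
      · rw [sout_out_pos hvert htT hj,
          Set.indicator_of_notMem (show (NetV.out v t : NetV V)
              ∉ {x | ∃ j, x = NetV.out (g j) T} by
            simp only [Set.mem_setOf_eq, NetV.out.injEq, not_exists, not_and]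
            intro j' _
            omega)]
        rcases Nat.eq_zero_or_pos t with rfl | ht0
        · have hi0 : pathFlow T l (NetV.inn v 0) (NetV.out v 0) = 0 := by
            have hle := pf_le_one (T := T) (l := l) (NetV.inn v 0) (NetV.out v 0)
            have h1 : pathFlow T l (NetV.inn v 0) (NetV.out v 0) ≠ 1 := fun h => by
              have := (pf_inn_out_iff.mp h).1
              omega
            omega
          rw [hi0, Set.indicator_of_mem (show (NetV.out v 0 : NetV V)
              ∈ {x | ∃ j, x = NetV.out (s j) 0} from ⟨j, by rw [← hl0 j, hj]⟩)]
          omega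
        · rw [pf_inn_out_iff.mpr ⟨ht0, by omega, j, hj⟩,
            Set.indicator_of_notMem (show (NetV.out v t : NetV V)
                ∉ {x | ∃ j, x = NetV.out (s j) 0} by
              simp only [Set.mem_setOf_eq, NetV.out.injEq, not_exists, not_and]
              intro j' _
              omega)]
      · subst heq
        rw [sout_out_neg (by rintro ⟨h, -⟩; omega),
          Set.indicator_of_mem (show (NetV.out v t : NetV V)
              ∈ {x | ∃ j, x = NetV.out (g j) t} from
            ⟨σ j, by rw [← hlT j t le_rfl, hj]⟩)]
        rcases Nat.eq_zero_or_pos t with rfl | ht0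
        · have hi0 : pathFlow 0 l (NetV.inn v 0) (NetV.out v 0) = 0 := by
            have hle := pf_le_one (T := 0) (l := l) (NetV.inn v 0) (NetV.out v 0)
            have h1 : pathFlow 0 l (NetV.inn v 0) (NetV.out v 0) ≠ 1 := fun h => by
              have := (pf_inn_out_iff.mp h).1
              omega
            omega
          rw [hi0, Set.indicator_of_mem (show (NetV.out v 0 : NetV V)
              ∈ {x | ∃ j, x = NetV.out (s j) 0} from ⟨j, by rw [← hl0 j, hj]⟩)]
        · rw [pf_inn_out_iff.mpr ⟨ht0, le_rfl, j, hj⟩,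
            Set.indicator_of_notMem (show (NetV.out v t : NetV V)
                ∉ {x | ∃ j, x = NetV.out (s j) 0} by
              simp only [Set.mem_setOf_eq, NetV.out.injEq, not_exists, not_and]
              intro j' _
              omega)]
          omega
      · rw [sout_out_neg (by rintro ⟨h, -⟩; omega)]
        have hi0 : pathFlow T l (NetV.inn v t) (NetV.out v t) = 0 := by
          have hle := pf_le_one (T := T) (l := l) (NetV.inn v t) (NetV.out v t)
          have h1 : pathFlow T l (NetV.inn v t) (NetV.out v t) ≠ 1 := fun h => by
            have := (pf_inn_out_iff.mp h).2.1
            omega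
          omega
        rw [hi0,
          Set.indicator_of_notMem (show (NetV.out v t : NetV V)
              ∉ {x | ∃ j, x = NetV.out (s j) 0} by
            simp only [Set.mem_setOf_eq, NetV.out.injEq, not_exists, not_and]
            intro j' _
            omega),
          Set.indicator_of_notMem (show (NetV.out v t : NetV V)
              ∉ {x | ∃ j, x = NetV.out (g j) T} by
            simp only [Set.mem_setOf_eq, NetV.out.injEq, not_exists, not_and]
            intro j' _
            omega)]
    · have hi0 : pathFlow T l (NetV.inn v t) (NetV.out v t) = 0 := by
        have hle := pf_le_one (T := T) (l := l) (NetV.inn v t) (NetV.out v t)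
        have h1 : pathFlow T l (NetV.inn v t) (NetV.out v t) ≠ 1 :=
          fun h => hocc (pf_inn_out_iff.mp h).2.2
        omega
      rw [hi0, sout_out_neg (fun h => hocc h.2),
        Set.indicator_of_notMem (show (NetV.out v t : NetV V)
            ∉ {x | ∃ j, x = NetV.out (s j) 0} by
          simp only [Set.mem_setOf_eq, NetV.out.injEq, not_exists, not_and]
          intro j' hv' ht0
          exact hocc ⟨j', by rw [ht0, hl0 j', hv']⟩),
        Set.indicator_of_notMem (show (NetV.out v t : NetV V)
            ∉ {x | ∃ j, x = NetV.out (g j) T} by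
          simp only [Set.mem_setOf_eq, NetV.out.injEq, not_exists, not_and]
          intro j' hv' htT
          exact hocc ⟨σ.symm j',
            by rw [htT, hlT (σ.symm j') T le_rfl, Equiv.apply_symm_apply, hv']⟩)]
  | gw a b t =>
    rw [Set.indicator_of_notMem (by simp), Set.indicator_of_notMem (by simp), sout_gw]
    by_cases hocc : ∃ j, t < T ∧ l j t ≠ l j (t+1) ∧ min (l j t) (l j (t+1)) = a
        ∧ max (l j t) (l j (t+1)) = b
    · obtain ⟨j, ht, hne, hmin, hmax⟩ := hocc
      rw [sin_gw_pos hvert hswap ht hne hmin hmax,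
        pf_gw_iff.mpr ⟨j, ht, hne, hmin, hmax⟩]
    · rw [sin_gw_neg hocc]
      have hle := pf_le_one (T := T) (l := l) (NetV.gw a b t) (NetV.gw' a b t)
      have h1 : pathFlow T l (NetV.gw a b t) (NetV.gw' a b t) ≠ 1 :=
        fun h => hocc (pf_gw_iff.mp h)
      omega
  | gw' a b t =>
    rw [Set.indicator_of_notMem (by simp), Set.indicator_of_notMem (by simp), sin_gw']
    by_cases hocc : ∃ j, t < T ∧ l j t ≠ l j (t+1) ∧ min (l j t) (l j (t+1)) = a
        ∧ max (l j t) (l j (t+1)) = b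
    · obtain ⟨j, ht, hne, hmin, hmax⟩ := hocc
      rw [sout_gw'_pos hvert hswap ht hne hmin hmax,
        pf_gw_iff.mpr ⟨j, ht, hne, hmin, hmax⟩]
    · rw [sout_gw'_neg hocc]
      have hle := pf_le_one (T := T) (l := l) (NetV.gw a b t) (NetV.gw' a b t)
      have h1 : pathFlow T l (NetV.gw a b t) (NetV.gw' a b t) ≠ 1 :=
        fun h => hocc (pf_gw_iff.mp h)
      omega

end Cons

end Backward

end MAPF

/-- Correspondence between feasible integer flows of value k on the T-step
time-expanded network for one team of k agents (distinct starts s, distinct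
targets g) and collision-free path sets achieving team cost at most T. -/
theorem stmt6 {V : Type*} [Fintype V] [LinearOrder V] (G : SimpleGraph V)
    (k T : ℕ) (s g : Fin k ↪ V) :
    (∃ f : NetV V → NetV V → ℕ,
      IsIntFlow G T {x | ∃ j, x = NetV.out (s j) 0}
        {x | ∃ j, x = NetV.out (g j) T} f)
    ↔ (∃ (σ : Equiv.Perm (Fin k)) (l : Fin k → ℕ → V),
        (∀ j, l j 0 = s j) ∧
        (∀ j, ∀ t ≥ T, l j t = g (σ j)) ∧
        (∀ j t, l j t = l j (t + 1) ∨ G.Adj (l j t) (l j (t + 1))) ∧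
        (∀ j j' t, j ≠ j' → l j t ≠ l j' t) ∧
        (∀ j j' t, j ≠ j' → ¬(l j t = l j' (t + 1) ∧ l j' t = l j (t + 1)))) := by
  constructor
  · rintro ⟨f, hcap, hf0, hcons⟩
    exact MAPF.forward hcap hf0 hcons
  · rintro ⟨σ, l, hl0, hlT, hmove, hvert, hswap⟩
    exact ⟨MAPF.pathFlow T l, fun x y => MAPF.pf_le_one x y,
      MAPF.pathFlow_edge hmove, MAPF.pathFlow_cons hl0 hlT hvert hswap⟩
end

section
/- There is a bijective correspondence between feasible integer multi-commodity flows of total value equal to the number of agents on the T-step time-expanded network (with one commodity per team, supplies at agents' start vertices at time 0 and demands at teams' targets at time T) and solutions of the TAPF instance with makespan at most T. -/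
/-- A feasible integer multi-commodity flow on the T-step time-expanded
network: one commodity per team; for each commodity i, one unit of supply at
the time-0 out-vertex of each start of team i and one unit of demand at the
time-T out-vertex of each target of team i; flow is supported on the network
edges; the total flow on each edge (summed over commodities) is at most its
unit capacity. -/
def IsMCFlow {V : Type*} [LinearOrder V] (G : SimpleGraph V) (T : ℕ)
    (K : ℕ) (Ki : Fin K → ℕ)
    (s g : (Σ i : Fin K, Fin (Ki i)) → V)
    (f : Fin K → NetV V → NetV V → ℕ) : Prop :=
  (∀ x y, (∑ i, f i x y) ≤ 1) ∧
  (∀ i x y, ¬ NetEdge G T x y → f i x y = 0) ∧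
  (∀ i x,
    (∑ᶠ y, f i y x) +
      Set.indicator {z | ∃ j, z = NetV.out (s ⟨i, j⟩) 0} (fun _ => 1) x
    = (∑ᶠ y, f i x y) +
      Set.indicator {z | ∃ j, z = NetV.out (g ⟨i, j⟩) T} (fun _ => 1) x)

/-- A TAPF solution with makespan at most T: an assignment of each team's
agents to its targets and collision-free paths realizing it, with every agent
at its target from time T onward. -/
def TAPFSolLE {V : Type*} (G : SimpleGraph V)
    (K : ℕ) (Ki : Fin K → ℕ)
    (s g : (Σ i : Fin K, Fin (Ki i)) → V) (T : ℕ) : Prop :=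
  ∃ (σ : ∀ i : Fin K, Equiv.Perm (Fin (Ki i)))
    (l : ∀ i : Fin K, Fin (Ki i) → ℕ → V),
    (∀ i j, l i j 0 = s ⟨i, j⟩) ∧
    (∀ i j, ∀ t ≥ T, l i j t = g ⟨i, (σ i) j⟩) ∧
    (∀ i j t, l i j t = l i j (t + 1) ∨ G.Adj (l i j t) (l i j (t + 1))) ∧
    (∀ (a b : Σ i : Fin K, Fin (Ki i)) (t : ℕ), a ≠ b →
      l a.1 a.2 t ≠ l b.1 b.2 t) ∧
    (∀ (a b : Σ i : Fin K, Fin (Ki i)) (t : ℕ), a ≠ b →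
      ¬(l a.1 a.2 t = l b.1 b.2 (t + 1) ∧ l b.1 b.2 t = l a.1 a.2 (t + 1)))

deriving instance DecidableEq for NetV

section Helpers

variable {V : Type*} [Fintype V] [LinearOrder V]

def box (V : Type*) [DecidableEq V] [Fintype V] (T : ℕ) : Finset (NetV V) :=
  (Finset.univ ×ˢ Finset.range (T+2)).image (fun p => NetV.inn p.1 p.2) ∪
  (Finset.univ ×ˢ Finset.range (T+2)).image (fun p => NetV.out p.1 p.2) ∪
  ((Finset.univ ×ˢ Finset.univ) ×ˢ Finset.range (T+2)).image
    (fun p => NetV.gw p.1.1 p.1.2 p.2) ∪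
  ((Finset.univ ×ˢ Finset.univ) ×ˢ Finset.range (T+2)).image
    (fun p => NetV.gw' p.1.1 p.1.2 p.2)

lemma mem_box {T : ℕ} : ∀ {x : NetV V}, (match x with
    | NetV.inn _ t => t < T + 2
    | NetV.out _ t => t < T + 2
    | NetV.gw _ _ t => t < T + 2
    | NetV.gw' _ _ t => t < T + 2) → x ∈ box V T := by
  intro x h
  cases x with
  | inn v t =>
    simp only [box, Finset.mem_union, Finset.mem_image, Finset.mem_product,
      Finset.mem_range, Finset.mem_univ, true_and, Prod.exists]
    exact Or.inl (Or.inl (Or.inl ⟨v, t, h, rfl⟩))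
  | out v t =>
    simp only [box, Finset.mem_union, Finset.mem_image, Finset.mem_product,
      Finset.mem_range, Finset.mem_univ, true_and, Prod.exists]
    exact Or.inl (Or.inl (Or.inr ⟨v, t, h, rfl⟩))
  | gw u v t =>
    simp only [box, Finset.mem_union, Finset.mem_image, Finset.mem_product,
      Finset.mem_range, Finset.mem_univ, true_and, Prod.exists]
    exact Or.inl (Or.inr ⟨u, v, t, h, rfl⟩)
  | gw' u v t =>
    simp only [box, Finset.mem_union, Finset.mem_image, Finset.mem_product,
      Finset.mem_range, Finset.mem_univ, true_and, Prod.exists]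
    exact Or.inr ⟨u, v, t, h, rfl⟩

lemma edge_mem_box {G : SimpleGraph V} {T : ℕ} {x y : NetV V}
    (h : NetEdge G T x y) : x ∈ box V T ∧ y ∈ box V T := by
  rcases h with ⟨v, t, ht, rfl, rfl⟩ | ⟨v, t, h1, h2, rfl, rfl⟩ |
    ⟨u, v, t, _, _, ht, (⟨rfl, rfl⟩|⟨rfl, rfl⟩|⟨rfl, rfl⟩|⟨rfl, rfl⟩|⟨rfl, rfl⟩)⟩ <;>
    exact ⟨mem_box (by omega), mem_box (by omega)⟩

/-- sum over box of a function supported on edges -/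
lemma finsum_eq_box_sum_left {G : SimpleGraph V} {T : ℕ} (F : NetV V → NetV V → ℕ)
    (hF : ∀ x y, ¬ NetEdge G T x y → F x y = 0) (x : NetV V) :
    (∑ᶠ y, F y x) = ∑ y ∈ box V T, F y x := by
  apply finsum_eq_finset_sum_of_support_subset
  intro y hy
  by_contra hmem
  exact hy (hF y x (fun he => hmem (edge_mem_box he).1))

lemma finsum_eq_box_sum_right {G : SimpleGraph V} {T : ℕ} (F : NetV V → NetV V → ℕ)
    (hF : ∀ x y, ¬ NetEdge G T x y → F x y = 0) (x : NetV V) :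
    (∑ᶠ y, F x y) = ∑ y ∈ box V T, F x y := by
  apply finsum_eq_finset_sum_of_support_subset
  intro y hy
  by_contra hmem
  exact hy (hF x y (fun he => hmem (edge_mem_box he).2))

/-- a 0/1-sum with at most one nonzero term is ≤ 1 -/
lemma sum_le_one {ι : Type*} [DecidableEq ι] {sf : Finset ι} (F : ι → ℕ) (h1 : ∀ a, F a ≤ 1)
    (h : ∀ a ∈ sf, ∀ b ∈ sf, F a ≠ 0 → F b ≠ 0 → a = b) : ∑ a ∈ sf, F a ≤ 1 := by
  by_cases hz : ∀ a ∈ sf, F a = 0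
  · simp [Finset.sum_eq_zero hz]
  · push_neg at hz
    obtain ⟨a, ha, hfa⟩ := hz
    rw [Finset.sum_eq_single_of_mem a ha]
    · exact h1 a
    · intro b hb hba
      by_contra hfb
      exact hba (h b hb a ha hfb hfa)

lemma two_le_sum {ι : Type*} [DecidableEq ι] {sf : Finset ι} (F : ι → ℕ) {a b : ι} (hab : a ≠ b)
    (ha : a ∈ sf) (hb : b ∈ sf) (hfa : 1 ≤ F a) (hfb : 1 ≤ F b) :
    2 ≤ ∑ x ∈ sf, F x := by
  have h : ({a, b} : Finset ι) ⊆ sf := by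
    intro x hx; rcases Finset.mem_insert.1 hx with rfl | hx
    · exact ha
    · rw [Finset.mem_singleton.1 hx]; exact hb
  calc 2 ≤ ∑ x ∈ ({a, b} : Finset ι), F x := by
        rw [Finset.sum_insert (by simpa using hab), Finset.sum_singleton]; omega
    _ ≤ _ := Finset.sum_le_sum_of_subset h

/-- indicator of the range of an injective function as a finite sum -/
lemma indicator_eq_sum {n : ℕ} {α : Type*} [DecidableEq α] (ϕ : Fin n → α) (hϕ : Function.Injective ϕ)
    (x : α) :
    Set.indicator {z | ∃ j, z = ϕ j} (fun _ => 1) x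
      = ∑ j : Fin n, if x = ϕ j then 1 else 0 := by
  classical
  by_cases hx : ∃ j, x = ϕ j
  · obtain ⟨j0, rfl⟩ := hx
    rw [Set.indicator_of_mem (s := {z | ∃ j, z = ϕ j}) ⟨j0, rfl⟩]
    rw [Finset.sum_eq_single_of_mem j0 (Finset.mem_univ _)]
    · simp
    · intro b _ hb
      simp only [ite_eq_right_iff]
      intro he
      exact absurd (hϕ he) (Ne.symm hb)
  · rw [Set.indicator_of_notMem (s := {z | ∃ j, z = ϕ j}) hx]
    symm
    apply Finset.sum_eq_zero
    intro j _
    simp only [ite_eq_right_iff]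
    intro he
    exact absurd ⟨j, he⟩ hx

end Helpers

section Backward
set_option linter.unusedSectionVars false

variable {V : Type*} [Fintype V] [LinearOrder V]

/-- the unit flow of a single agent with trajectory `la` -/
def agentFlow (T : ℕ) (la : ℕ → V) : NetV V → NetV V → ℕ := fun x y =>
  match x with
  | NetV.inn v t => if 1 ≤ t ∧ t ≤ T ∧ v = la t ∧ y = NetV.out v t then 1 else 0
  | NetV.out v t => if t < T ∧ v = la t ∧
      y = (if la t = la (t+1) then NetV.inn v (t+1)
           else NetV.gw (min (la t) (la (t+1))) (max (la t) (la (t+1))) t) then 1 else 0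
  | NetV.gw u w t => if t < T ∧ la t ≠ la (t+1) ∧ u = min (la t) (la (t+1)) ∧
      w = max (la t) (la (t+1)) ∧ y = NetV.gw' u w t then 1 else 0
  | NetV.gw' u w t => if t < T ∧ la t ≠ la (t+1) ∧ u = min (la t) (la (t+1)) ∧
      w = max (la t) (la (t+1)) ∧ y = NetV.inn (la (t+1)) (t+1) then 1 else 0

variable {T : ℕ} {la : ℕ → V}

lemma minmax_forces {a b c : V} (hm : min a b = c) (hM : max a b = c) : a = b :=
  le_antisymm (le_of_le_of_eq (le_max_left a b) (hM.trans hm.symm) |>.trans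
      (min_le_right a b))
    (le_of_le_of_eq (le_max_right a b) (hM.trans hm.symm) |>.trans (min_le_left a b))

lemma agentFlow_le_one (x y : NetV V) : agentFlow T la x y ≤ 1 := by
  cases x <;> simp only [agentFlow] <;> split_ifs <;> omega

lemma agentFlow_edge {G : SimpleGraph V}
    (hadj : ∀ t, la t = la (t+1) ∨ G.Adj (la t) (la (t+1)))
    {x y : NetV V} (h : agentFlow T la x y ≠ 0) : NetEdge G T x y := by
  have hAdj : ∀ t, la t ≠ la (t+1) →
      G.Adj (min (la t) (la (t+1))) (max (la t) (la (t+1))) := by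
    intro t hne
    rcases (hadj t) with h | h
    · exact absurd h hne
    · rcases le_total (la t) (la (t+1)) with hle | hle
      · rwa [min_eq_left hle, max_eq_right hle]
      · rw [min_eq_right hle, max_eq_left hle]; exact h.symm
  cases x with
  | inn v t =>
    simp only [agentFlow, ne_eq, ite_eq_right_iff, not_forall] at h
    obtain ⟨⟨h1, h2, h3, rfl⟩, -⟩ := h
    exact Or.inr (Or.inl ⟨v, t, h1, h2, rfl, rfl⟩)
  | out v t =>
    simp only [agentFlow, ne_eq, ite_eq_right_iff, not_forall] at h
    obtain ⟨⟨h1, rfl, rfl⟩, -⟩ := h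
    by_cases hmv : la t = la (t+1)
    · rw [if_pos hmv]
      exact Or.inl ⟨la t, t, h1, rfl, rfl⟩
    · rw [if_neg hmv]
      refine Or.inr (Or.inr ⟨_, _, t, hAdj t hmv, min_lt_max.2 hmv, h1, ?_⟩)
      rcases min_choice (la t) (la (t+1)) with hm | hm
      · exact Or.inl ⟨by rw [hm], rfl⟩
      · refine Or.inr (Or.inl ⟨?_, rfl⟩)
        rcases max_choice (la t) (la (t+1)) with hM | hM
        · rw [hM]
        · exact absurd (minmax_forces hm hM) hmv
  | gw u w t =>
    simp only [agentFlow, ne_eq, ite_eq_right_iff, not_forall] at h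
    obtain ⟨⟨h1, h2, rfl, rfl, rfl⟩, -⟩ := h
    exact Or.inr (Or.inr ⟨_, _, t, hAdj t h2, min_lt_max.2 h2, h1,
      Or.inr (Or.inr (Or.inl ⟨rfl, rfl⟩))⟩)
  | gw' u w t =>
    simp only [agentFlow, ne_eq, ite_eq_right_iff, not_forall] at h
    obtain ⟨⟨h1, h2, rfl, rfl, rfl⟩, -⟩ := h
    refine Or.inr (Or.inr ⟨_, _, t, hAdj t h2, min_lt_max.2 h2, h1, ?_⟩)
    rcases min_choice (la t) (la (t+1)) with hm | hm
    · refine Or.inr (Or.inr (Or.inr (Or.inr ⟨rfl, ?_⟩)))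
      rcases max_choice (la t) (la (t+1)) with hM | hM
      · exact absurd (minmax_forces hm hM) h2
      · rw [hM]
    · exact Or.inr (Or.inr (Or.inr (Or.inl ⟨rfl, by rw [hm]⟩)))

lemma minmax_eq {a b c d : V} (h1 : min a b = min c d) (h2 : max a b = max c d) :
    (a = c ∧ b = d) ∨ (a = d ∧ b = c) := by
  simp only [min_def, max_def] at h1 h2
  split_ifs at h1 h2 <;> tauto

/-- two agents with disjoint, non-swapping trajectories cannot both use a
network edge -/
lemma agentFlow_disjoint {lb : ℕ → V}
    (hv : ∀ t, la t ≠ lb t)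
    (hsw : ∀ t, ¬(la t = lb (t+1) ∧ lb t = la (t+1)))
    (x y : NetV V) : agentFlow T la x y = 0 ∨ agentFlow T lb x y = 0 := by
  by_contra hc
  push_neg at hc
  obtain ⟨ha, hb⟩ := hc
  cases x with
  | inn v t =>
    simp only [agentFlow, ne_eq, ite_eq_right_iff, not_forall] at ha hb
    obtain ⟨⟨-, -, h3, -⟩, -⟩ := ha
    obtain ⟨⟨-, -, h3', -⟩, -⟩ := hb
    exact hv t (h3 ▸ h3' ▸ rfl)
  | out v t =>
    simp only [agentFlow, ne_eq, ite_eq_right_iff, not_forall] at ha hb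
    obtain ⟨⟨-, h3, -⟩, -⟩ := ha
    obtain ⟨⟨-, h3', -⟩, -⟩ := hb
    exact hv t (h3 ▸ h3' ▸ rfl)
  | gw u w t =>
    simp only [agentFlow, ne_eq, ite_eq_right_iff, not_forall] at ha hb
    obtain ⟨⟨-, hm, hu, hw, -⟩, -⟩ := ha
    obtain ⟨⟨-, hm', hu', hw', -⟩, -⟩ := hb
    rcases minmax_eq (hu.symm.trans hu') (hw.symm.trans hw') with ⟨e1, e2⟩ | ⟨e1, e2⟩
    · exact hv t e1
    · exact hsw t ⟨e1, e2.symm⟩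
  | gw' u w t =>
    simp only [agentFlow, ne_eq, ite_eq_right_iff, not_forall] at ha hb
    obtain ⟨⟨-, hm, hu, hw, -⟩, -⟩ := ha
    obtain ⟨⟨-, hm', hu', hw', -⟩, -⟩ := hb
    rcases minmax_eq (hu.symm.trans hu') (hw.symm.trans hw') with ⟨e1, e2⟩ | ⟨e1, e2⟩
    · exact hv t e1
    · exact hsw t ⟨e1, e2.symm⟩

end Backward
section BSums
set_option linter.unusedSectionVars false
set_option maxHeartbeats 1000000

variable {V : Type*} [Fintype V] [LinearOrder V] {T : ℕ} {la : ℕ → V}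

lemma outSum_inn (v : V) (t : ℕ) :
    ∑ y ∈ box V T, agentFlow T la (NetV.inn v t) y
      = if 1 ≤ t ∧ t ≤ T ∧ v = la t then 1 else 0 := by
  split_ifs with hP
  · obtain ⟨h1, h2, h3⟩ := hP
    rw [Finset.sum_eq_single_of_mem (NetV.out v t) (mem_box (by omega))]
    · simp [agentFlow, h1, h2, h3]
    · intro b _ hb
      simp only [agentFlow]
      rw [if_neg]
      rintro ⟨-, -, -, rfl⟩
      exact hb rfl
  · apply Finset.sum_eq_zero
    intro b _
    simp only [agentFlow]
    rw [if_neg]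
    rintro ⟨x1, x2, x3, -⟩
    exact hP ⟨x1, x2, x3⟩

lemma outSum_out (v : V) (t : ℕ) :
    ∑ y ∈ box V T, agentFlow T la (NetV.out v t) y
      = if t < T ∧ v = la t then 1 else 0 := by
  split_ifs with hP
  · obtain ⟨h1, h2⟩ := hP
    rw [Finset.sum_eq_single_of_mem
        (if la t = la (t+1) then NetV.inn v (t+1)
         else NetV.gw (min (la t) (la (t+1))) (max (la t) (la (t+1))) t)]
    · simp only [agentFlow]
      rw [if_pos (⟨h1, h2, by trivial⟩ : _ ∧ _ ∧ _)]
    · split_ifs <;> exact mem_box (by omega)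
    · intro b _ hb
      simp only [agentFlow]
      rw [if_neg]
      rintro ⟨-, -, rfl⟩
      exact hb rfl
  · apply Finset.sum_eq_zero
    intro b _
    simp only [agentFlow]
    rw [if_neg]
    rintro ⟨x1, x2, -⟩
    exact hP ⟨x1, x2⟩

lemma outSum_gw (u w : V) (t : ℕ) :
    ∑ y ∈ box V T, agentFlow T la (NetV.gw u w t) y
      = if t < T ∧ la t ≠ la (t+1) ∧ u = min (la t) (la (t+1)) ∧
          w = max (la t) (la (t+1)) then 1 else 0 := by
  split_ifs with hP
  · obtain ⟨h1, h2, h3, h4⟩ := hP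
    rw [Finset.sum_eq_single_of_mem (NetV.gw' u w t) (mem_box (by omega))]
    · simp [agentFlow, h1, h2, h3, h4]
    · intro b _ hb
      simp only [agentFlow]
      rw [if_neg]
      rintro ⟨-, -, -, -, rfl⟩
      exact hb rfl
  · apply Finset.sum_eq_zero
    intro b _
    simp only [agentFlow]
    rw [if_neg]
    rintro ⟨x1, x2, x3, x4, -⟩
    exact hP ⟨x1, x2, x3, x4⟩

lemma outSum_gw' (u w : V) (t : ℕ) :
    ∑ y ∈ box V T, agentFlow T la (NetV.gw' u w t) y
      = if t < T ∧ la t ≠ la (t+1) ∧ u = min (la t) (la (t+1)) ∧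
          w = max (la t) (la (t+1)) then 1 else 0 := by
  split_ifs with hP
  · obtain ⟨h1, h2, h3, h4⟩ := hP
    rw [Finset.sum_eq_single_of_mem (NetV.inn (la (t+1)) (t+1)) (mem_box (by omega))]
    · simp [agentFlow, h1, h2, h3, h4]
    · intro b _ hb
      simp only [agentFlow]
      rw [if_neg]
      rintro ⟨-, -, -, -, rfl⟩
      exact hb rfl
  · apply Finset.sum_eq_zero
    intro b _
    simp only [agentFlow]
    rw [if_neg]
    rintro ⟨x1, x2, x3, x4, -⟩
    exact hP ⟨x1, x2, x3, x4⟩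

end BSums
section BSums2
set_option linter.unusedSectionVars false
set_option maxHeartbeats 1000000

variable {V : Type*} [Fintype V] [LinearOrder V] {T : ℕ} {la : ℕ → V}

lemma inSum_out (v : V) (t : ℕ) :
    ∑ y ∈ box V T, agentFlow T la y (NetV.out v t)
      = if 1 ≤ t ∧ t ≤ T ∧ v = la t then 1 else 0 := by
  have key : ∀ b, b ≠ NetV.inn v t → agentFlow T la b (NetV.out v t) = 0 := by
    intro b hb
    cases b with
    | inn v' s =>
      simp only [agentFlow]; rw [if_neg]
      rintro ⟨-, -, -, heq⟩
      simp only [NetV.out.injEq] at heq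
      obtain ⟨rfl, rfl⟩ := heq
      exact hb rfl
    | out v' s =>
      simp only [agentFlow]; rw [if_neg]
      rintro ⟨-, -, heq⟩
      split_ifs at heq
    | gw u' w' s =>
      simp only [agentFlow]; rw [if_neg]
      rintro ⟨-, -, -, -, heq⟩
      simp at heq
    | gw' u' w' s =>
      simp only [agentFlow]; rw [if_neg]
      rintro ⟨-, -, -, -, heq⟩
      simp at heq
  split_ifs with hP
  · obtain ⟨h1, h2, h3⟩ := hP
    rw [Finset.sum_eq_single_of_mem (NetV.inn v t) (mem_box (by omega))]
    · simp [agentFlow, h1, h2, h3]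
    · intro b _ hb; exact key b hb
  · apply Finset.sum_eq_zero
    intro b _
    by_cases hb : b = NetV.inn v t
    · subst hb
      simp only [agentFlow]; rw [if_neg]
      rintro ⟨x1, x2, x3, -⟩
      exact hP ⟨x1, x2, x3⟩
    · exact key b hb

lemma inSum_inn (v : V) (t : ℕ) :
    ∑ y ∈ box V T, agentFlow T la y (NetV.inn v t)
      = if 1 ≤ t ∧ t ≤ T ∧ v = la t then 1 else 0 := by
  split_ifs with hP
  · obtain ⟨h1, h2, h3⟩ := hP
    subst h3
    obtain ⟨t', rfl⟩ : ∃ t', t = t' + 1 := ⟨t - 1, by omega⟩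
    have h1' : t' < T := by omega
    by_cases hmv : la t' = la (t' + 1)
    · rw [Finset.sum_eq_single_of_mem (NetV.out (la t') t') (mem_box (by omega))]
      · rw [show la (t' + 1) = la t' from hmv.symm]
        simp [agentFlow, h1', if_pos hmv]
      · intro b _ hb
        cases b with
        | inn v' s =>
          simp only [agentFlow]; rw [if_neg]
          rintro ⟨-, -, -, heq⟩
          simp at heq
        | out v' s =>
          simp only [agentFlow]; rw [if_neg]
          rintro ⟨hs, hv', heq⟩
          split_ifs at heq with hst
          simp only [NetV.inn.injEq] at heq
          obtain ⟨he1, he2⟩ := heq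
          have hs' : s = t' := by omega
          subst hs'
          exact hb (by rw [hv'])
        | gw u' w' s =>
          simp only [agentFlow]; rw [if_neg]
          rintro ⟨-, -, -, -, heq⟩
          simp at heq
        | gw' u' w' s =>
          simp only [agentFlow]; rw [if_neg]
          rintro ⟨hs, hmv', -, -, heq⟩
          simp only [NetV.inn.injEq] at heq
          obtain ⟨he1, he2⟩ := heq
          have hs' : s = t' := by omega
          subst hs'
          exact hmv' hmv
    · rw [Finset.sum_eq_single_of_mem
          (NetV.gw' (min (la t') (la (t'+1))) (max (la t') (la (t'+1))) t')
          (mem_box (by omega))]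
      · simp [agentFlow, h1', hmv]
      · intro b _ hb
        cases b with
        | inn v' s =>
          simp only [agentFlow]; rw [if_neg]
          rintro ⟨-, -, -, heq⟩
          simp at heq
        | out v' s =>
          simp only [agentFlow]; rw [if_neg]
          rintro ⟨hs, hv', heq⟩
          split_ifs at heq with hst
          simp only [NetV.inn.injEq] at heq
          obtain ⟨he1, he2⟩ := heq
          have hs' : s = t' := by omega
          subst hs'
          exact hmv hst
        | gw u' w' s =>
          simp only [agentFlow]; rw [if_neg]
          rintro ⟨-, -, -, -, heq⟩
          simp at heq
        | gw' u' w' s =>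
          simp only [agentFlow]; rw [if_neg]
          rintro ⟨hs, hmv', hu, hw, heq⟩
          simp only [NetV.inn.injEq] at heq
          obtain ⟨he1, he2⟩ := heq
          have hs' : s = t' := by omega
          subst hs'
          subst hu; subst hw
          exact hb rfl
  · apply Finset.sum_eq_zero
    intro b _
    cases b with
    | inn v' s =>
      simp only [agentFlow]; rw [if_neg]
      rintro ⟨-, -, -, heq⟩
      simp at heq
    | out v' s =>
      simp only [agentFlow]; rw [if_neg]
      rintro ⟨hs, hv', heq⟩
      split_ifs at heq with hst
      simp only [NetV.inn.injEq] at heq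
      obtain ⟨he1, he2⟩ := heq
      subst he1
      exact hP ⟨by omega, by omega, by rw [hv', hst]; congr 1; omega⟩
    | gw u' w' s =>
      simp only [agentFlow]; rw [if_neg]
      rintro ⟨-, -, -, -, heq⟩
      simp at heq
    | gw' u' w' s =>
      simp only [agentFlow]; rw [if_neg]
      rintro ⟨hs, hmv', -, -, heq⟩
      simp only [NetV.inn.injEq] at heq
      obtain ⟨he1, he2⟩ := heq
      exact hP ⟨by omega, by omega, by rw [he1, he2]⟩

lemma inSum_gw (u w : V) (t : ℕ) :
    ∑ y ∈ box V T, agentFlow T la y (NetV.gw u w t)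
      = if t < T ∧ la t ≠ la (t+1) ∧ u = min (la t) (la (t+1)) ∧
          w = max (la t) (la (t+1)) then 1 else 0 := by
  have key : ∀ b, b ≠ NetV.out (la t) t →
      agentFlow T la b (NetV.gw u w t) = 0 := by
    intro b hb
    cases b with
    | inn v' s =>
      simp only [agentFlow]; rw [if_neg]
      rintro ⟨-, -, -, heq⟩
      simp at heq
    | out v' s =>
      simp only [agentFlow]; rw [if_neg]
      rintro ⟨hs, hv', heq⟩
      split_ifs at heq with hst
      simp only [NetV.gw.injEq] at heq
      obtain ⟨-, -, rfl⟩ := heq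
      exact hb (by rw [hv'])
    | gw u' w' s =>
      simp only [agentFlow]; rw [if_neg]
      rintro ⟨-, -, -, -, heq⟩
      simp at heq
    | gw' u' w' s =>
      simp only [agentFlow]; rw [if_neg]
      rintro ⟨-, -, -, -, heq⟩
      simp at heq
  split_ifs with hP
  · obtain ⟨h1, h2, h3, h4⟩ := hP
    rw [Finset.sum_eq_single_of_mem (NetV.out (la t) t) (mem_box (by omega))]
    · subst h3; subst h4
      simp [agentFlow, h1, if_neg h2]
    · intro b _ hb; exact key b hb
  · apply Finset.sum_eq_zero
    intro b _
    by_cases hb : b = NetV.out (la t) t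
    · subst hb
      simp only [agentFlow]; rw [if_neg]
      rintro ⟨hs, -, heq⟩
      split_ifs at heq with hst
      simp only [NetV.gw.injEq] at heq
      obtain ⟨rfl, rfl, -⟩ := heq
      exact hP ⟨hs, hst, rfl, rfl⟩
    · exact key b hb

lemma inSum_gw' (u w : V) (t : ℕ) :
    ∑ y ∈ box V T, agentFlow T la y (NetV.gw' u w t)
      = if t < T ∧ la t ≠ la (t+1) ∧ u = min (la t) (la (t+1)) ∧
          w = max (la t) (la (t+1)) then 1 else 0 := by
  have key : ∀ b, b ≠ NetV.gw u w t →
      agentFlow T la b (NetV.gw' u w t) = 0 := by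
    intro b hb
    cases b with
    | inn v' s =>
      simp only [agentFlow]; rw [if_neg]
      rintro ⟨-, -, -, heq⟩
      simp at heq
    | out v' s =>
      simp only [agentFlow]; rw [if_neg]
      rintro ⟨-, -, heq⟩
      split_ifs at heq
    | gw u' w' s =>
      simp only [agentFlow]; rw [if_neg]
      rintro ⟨-, -, -, -, heq⟩
      simp only [NetV.gw'.injEq] at heq
      obtain ⟨rfl, rfl, rfl⟩ := heq
      exact hb rfl
    | gw' u' w' s =>
      simp only [agentFlow]; rw [if_neg]
      rintro ⟨-, -, -, -, heq⟩
      simp at heq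
  split_ifs with hP
  · obtain ⟨h1, h2, h3, h4⟩ := hP
    rw [Finset.sum_eq_single_of_mem (NetV.gw u w t) (mem_box (by omega))]
    · simp [agentFlow, h1, h2, h3, h4]
    · intro b _ hb; exact key b hb
  · apply Finset.sum_eq_zero
    intro b _
    by_cases hb : b = NetV.gw u w t
    · subst hb
      simp only [agentFlow]; rw [if_neg]
      rintro ⟨x1, x2, x3, x4, -⟩
      exact hP ⟨x1, x2, x3, x4⟩
    · exact key b hb

end BSums2
section BFinal
set_option linter.unusedSectionVars false
set_option maxHeartbeats 1000000

variable {V : Type*} [Fintype V] [LinearOrder V] {T : ℕ} {la : ℕ → V}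

lemma agentFlow_conservation (x : NetV V) :
    (∑ y ∈ box V T, agentFlow T la y x) + (if x = NetV.out (la 0) 0 then 1 else 0)
      = (∑ y ∈ box V T, agentFlow T la x y)
        + (if x = NetV.out (la T) T then 1 else 0) := by
  cases x with
  | inn v t =>
    rw [inSum_inn, outSum_inn,
      if_neg (show ¬(NetV.inn v t = NetV.out (la 0) 0) by simp),
      if_neg (show ¬(NetV.inn v t = NetV.out (la T) T) by simp)]
  | gw u w t =>
    rw [inSum_gw, outSum_gw,
      if_neg (show ¬(NetV.gw u w t = NetV.out (la 0) 0) by simp),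
      if_neg (show ¬(NetV.gw u w t = NetV.out (la T) T) by simp)]
  | gw' u w t =>
    rw [inSum_gw', outSum_gw',
      if_neg (show ¬(NetV.gw' u w t = NetV.out (la 0) 0) by simp),
      if_neg (show ¬(NetV.gw' u w t = NetV.out (la T) T) by simp)]
  | out v t =>
    rw [inSum_out, outSum_out]
    simp only [NetV.out.injEq]
    have hA : (1 ≤ t ∧ t ≤ T ∧ v = la t) ↔ (v = la t ∧ 1 ≤ t ∧ t ≤ T) := by tauto
    have hC : (t < T ∧ v = la t) ↔ (v = la t ∧ t < T) := by tauto
    have hB : (v = la 0 ∧ t = 0) ↔ (v = la t ∧ t = 0) := by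
      constructor
      · rintro ⟨h1, rfl⟩; exact ⟨h1, rfl⟩
      · rintro ⟨h1, rfl⟩; exact ⟨h1, rfl⟩
    have hD : (v = la T ∧ t = T) ↔ (v = la t ∧ t = T) := by
      constructor
      · rintro ⟨h1, rfl⟩; exact ⟨h1, rfl⟩
      · rintro ⟨h1, rfl⟩; exact ⟨h1, rfl⟩
    rw [if_congr hA rfl rfl, if_congr hB rfl rfl, if_congr hC rfl rfl,
      if_congr hD rfl rfl]
    by_cases hv : v = la t
    · simp only [hv, true_and]
      split_ifs <;> omega
    · simp only [eq_false hv, false_and, if_false]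

end BFinal

section Backward2
set_option linter.unusedSectionVars false
set_option maxHeartbeats 1000000

lemma backward {V : Type*} [Fintype V] [LinearOrder V] (G : SimpleGraph V)
    (T K : ℕ) (Ki : Fin K → ℕ)
    (s g : (Σ i : Fin K, Fin (Ki i)) → V)
    (hs : Function.Injective s) (hg : Function.Injective g)
    (hsol : TAPFSolLE G K Ki s g T) :
    ∃ f : Fin K → NetV V → NetV V → ℕ, IsMCFlow G T K Ki s g f := by
  obtain ⟨σ, l, hl0, hlT, hadj, hvert, hswap⟩ := hsol
  have hsig : ∀ (i : Fin K) (j j' : Fin (Ki i)),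
      (⟨i, j⟩ : Σ i, Fin (Ki i)) = ⟨i, j'⟩ → j = j' := by
    intro i j j' h
    simpa using h
  refine ⟨fun i x y => ∑ j : Fin (Ki i), agentFlow T (l i j) x y, ?_, ?_, ?_⟩
  · -- capacity
    intro x y
    show (∑ i : Fin K, ∑ j : Fin (Ki i), agentFlow T (l i j) x y) ≤ 1
    rw [Finset.sum_sigma']
    apply sum_le_one
    · intro a; exact agentFlow_le_one x y
    · intro a _ b _ hfa hfb
      by_contra hab
      rcases agentFlow_disjoint (fun t => hvert a b t hab)
          (fun t => hswap a b t hab) x y with h | h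
      · exact hfa h
      · exact hfb h
  · -- support
    intro i x y he
    apply Finset.sum_eq_zero; intro j _
    by_contra hne
    exact he (agentFlow_edge (fun t => hadj i j t) hne)
  · -- conservation
    intro i x
    have hfsupp : ∀ x y, ¬ NetEdge G T x y →
        (∑ j : Fin (Ki i), agentFlow T (l i j) x y) = 0 := by
      intro x y he
      apply Finset.sum_eq_zero; intro j _
      by_contra hne
      exact he (agentFlow_edge (fun t => hadj i j t) hne)
    rw [finsum_eq_box_sum_left _ hfsupp x, finsum_eq_box_sum_right _ hfsupp x,
      Finset.sum_comm, Finset.sum_comm (s := box V T)]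
    have hinj1 : Function.Injective (fun j : Fin (Ki i) => NetV.out (s ⟨i, j⟩) 0) := by
      intro j j' h
      simp only [NetV.out.injEq] at h
      exact hsig i j j' (hs h.1)
    have hinj2 : Function.Injective
        (fun j : Fin (Ki i) => NetV.out (g ⟨i, (σ i) j⟩) T) := by
      intro j j' h
      simp only [NetV.out.injEq] at h
      exact (σ i).injective (hsig i _ _ (hg h.1))
    have hset : {z : NetV V | ∃ j, z = NetV.out (g ⟨i, j⟩) T}
        = {z | ∃ j, z = NetV.out (g ⟨i, (σ i) j⟩) T} := by
      ext z
      constructor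
      · rintro ⟨j, rfl⟩; exact ⟨(σ i).symm j, by simp⟩
      · rintro ⟨j, rfl⟩; exact ⟨(σ i) j, rfl⟩
    rw [indicator_eq_sum _ hinj1 x, hset, indicator_eq_sum _ hinj2 x,
      ← Finset.sum_add_distrib, ← Finset.sum_add_distrib]
    apply Finset.sum_congr rfl
    intro j _
    have hc := agentFlow_conservation (T := T) (la := l i j) x
    rw [hl0 i j, hlT i j T le_rfl] at hc
    exact hc

end Backward2
section Shapes
set_option linter.unusedSectionVars false
set_option maxHeartbeats 1000000

variable {V : Type*} [LinearOrder V] {G : SimpleGraph V} {T : ℕ}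

lemma succ_inn {v : V} {t : ℕ} {y : NetV V} (h : NetEdge G T (NetV.inn v t) y) :
    y = NetV.out v t ∧ 1 ≤ t ∧ t ≤ T := by
  rcases h with ⟨z1, t2, ht, hx, hy⟩ | ⟨z1, t2, h1, h2, hx, hy⟩ |
    ⟨z1, z2, t2, hadj, hlt, ht, (⟨hx, hy⟩|⟨hx, hy⟩|⟨hx, hy⟩|⟨hx, hy⟩|⟨hx, hy⟩)⟩
  · exact absurd hx (by simp)
  · simp only [NetV.inn.injEq] at hx
    obtain ⟨rfl, rfl⟩ := hx
    exact ⟨hy, h1, h2⟩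
  · exact absurd hx (by simp)
  · exact absurd hx (by simp)
  · exact absurd hx (by simp)
  · exact absurd hx (by simp)
  · exact absurd hx (by simp)

lemma succ_out {v : V} {t : ℕ} {y : NetV V} (h : NetEdge G T (NetV.out v t) y) :
    t < T ∧ (y = NetV.inn v (t+1) ∨
      ∃ u w, G.Adj u w ∧ u < w ∧ (v = u ∨ v = w) ∧ y = NetV.gw u w t) := by
  rcases h with ⟨z1, t2, ht, hx, hy⟩ | ⟨z1, t2, h1, h2, hx, hy⟩ |
    ⟨z1, z2, t2, hadj, hlt, ht, (⟨hx, hy⟩|⟨hx, hy⟩|⟨hx, hy⟩|⟨hx, hy⟩|⟨hx, hy⟩)⟩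
  · simp only [NetV.out.injEq] at hx
    obtain ⟨rfl, rfl⟩ := hx
    exact ⟨ht, Or.inl hy⟩
  · exact absurd hx (by simp)
  · simp only [NetV.out.injEq] at hx
    obtain ⟨rfl, rfl⟩ := hx
    exact ⟨ht, Or.inr ⟨v, z2, hadj, hlt, Or.inl rfl, hy⟩⟩
  · simp only [NetV.out.injEq] at hx
    obtain ⟨rfl, rfl⟩ := hx
    exact ⟨ht, Or.inr ⟨z1, v, hadj, hlt, Or.inr rfl, hy⟩⟩
  · exact absurd hx (by simp)
  · exact absurd hx (by simp)
  · exact absurd hx (by simp)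

lemma succ_gw {u w : V} {t : ℕ} {y : NetV V} (h : NetEdge G T (NetV.gw u w t) y) :
    y = NetV.gw' u w t ∧ t < T := by
  rcases h with ⟨z1, t2, ht, hx, hy⟩ | ⟨z1, t2, h1, h2, hx, hy⟩ |
    ⟨z1, z2, t2, hadj, hlt, ht, (⟨hx, hy⟩|⟨hx, hy⟩|⟨hx, hy⟩|⟨hx, hy⟩|⟨hx, hy⟩)⟩
  · exact absurd hx (by simp)
  · exact absurd hx (by simp)
  · exact absurd hx (by simp)
  · exact absurd hx (by simp)
  · simp only [NetV.gw.injEq] at hx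
    obtain ⟨rfl, rfl, rfl⟩ := hx
    exact ⟨hy, ht⟩
  · exact absurd hx (by simp)
  · exact absurd hx (by simp)

lemma succ_gw' {u w : V} {t : ℕ} {y : NetV V}
    (h : NetEdge G T (NetV.gw' u w t) y) :
    t < T ∧ G.Adj u w ∧ u < w ∧ (y = NetV.inn u (t+1) ∨ y = NetV.inn w (t+1)) := by
  rcases h with ⟨z1, t2, ht, hx, hy⟩ | ⟨z1, t2, h1, h2, hx, hy⟩ |
    ⟨z1, z2, t2, hadj, hlt, ht, (⟨hx, hy⟩|⟨hx, hy⟩|⟨hx, hy⟩|⟨hx, hy⟩|⟨hx, hy⟩)⟩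
  · exact absurd hx (by simp)
  · exact absurd hx (by simp)
  · exact absurd hx (by simp)
  · exact absurd hx (by simp)
  · exact absurd hx (by simp)
  · simp only [NetV.gw'.injEq] at hx
    obtain ⟨rfl, rfl, rfl⟩ := hx
    exact ⟨ht, hadj, hlt, Or.inl hy⟩
  · simp only [NetV.gw'.injEq] at hx
    obtain ⟨rfl, rfl, rfl⟩ := hx
    exact ⟨ht, hadj, hlt, Or.inr hy⟩

lemma pred_out {v : V} {t : ℕ} {y : NetV V} (h : NetEdge G T y (NetV.out v t)) :
    y = NetV.inn v t ∧ 1 ≤ t ∧ t ≤ T := by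
  rcases h with ⟨z1, t2, ht, hx, hy⟩ | ⟨z1, t2, h1, h2, hx, hy⟩ |
    ⟨z1, z2, t2, hadj, hlt, ht, (⟨hx, hy⟩|⟨hx, hy⟩|⟨hx, hy⟩|⟨hx, hy⟩|⟨hx, hy⟩)⟩
  · exact absurd hy (by simp)
  · simp only [NetV.out.injEq] at hy
    obtain ⟨rfl, rfl⟩ := hy
    exact ⟨hx, h1, h2⟩
  · exact absurd hy (by simp)
  · exact absurd hy (by simp)
  · exact absurd hy (by simp)
  · exact absurd hy (by simp)
  · exact absurd hy (by simp)

lemma pred_inn {v : V} {t' : ℕ} {y : NetV V} (h : NetEdge G T y (NetV.inn v t')) :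
    ∃ t, t' = t + 1 ∧ t < T ∧ (y = NetV.out v t ∨
      ∃ u w, G.Adj u w ∧ u < w ∧ (v = u ∨ v = w) ∧ y = NetV.gw' u w t) := by
  rcases h with ⟨z1, t2, ht, hx, hy⟩ | ⟨z1, t2, h1, h2, hx, hy⟩ |
    ⟨z1, z2, t2, hadj, hlt, ht, (⟨hx, hy⟩|⟨hx, hy⟩|⟨hx, hy⟩|⟨hx, hy⟩|⟨hx, hy⟩)⟩
  · simp only [NetV.inn.injEq] at hy
    obtain ⟨rfl, rfl⟩ := hy
    exact ⟨t2, rfl, ht, Or.inl hx⟩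
  · exact absurd hy (by simp)
  · exact absurd hy (by simp)
  · exact absurd hy (by simp)
  · exact absurd hy (by simp)
  · simp only [NetV.inn.injEq] at hy
    obtain ⟨rfl, rfl⟩ := hy
    exact ⟨t2, rfl, ht, Or.inr ⟨v, z2, hadj, hlt, Or.inl rfl, hx⟩⟩
  · simp only [NetV.inn.injEq] at hy
    obtain ⟨rfl, rfl⟩ := hy
    exact ⟨t2, rfl, ht, Or.inr ⟨z1, v, hadj, hlt, Or.inr rfl, hx⟩⟩

lemma pred_gw {u w : V} {t : ℕ} {y : NetV V} (h : NetEdge G T y (NetV.gw u w t)) :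
    (y = NetV.out u t ∨ y = NetV.out w t) ∧ t < T := by
  rcases h with ⟨z1, t2, ht, hx, hy⟩ | ⟨z1, t2, h1, h2, hx, hy⟩ |
    ⟨z1, z2, t2, hadj, hlt, ht, (⟨hx, hy⟩|⟨hx, hy⟩|⟨hx, hy⟩|⟨hx, hy⟩|⟨hx, hy⟩)⟩
  · exact absurd hy (by simp)
  · exact absurd hy (by simp)
  · simp only [NetV.gw.injEq] at hy
    obtain ⟨rfl, rfl, rfl⟩ := hy
    exact ⟨Or.inl hx, ht⟩
  · simp only [NetV.gw.injEq] at hy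
    obtain ⟨rfl, rfl, rfl⟩ := hy
    exact ⟨Or.inr hx, ht⟩
  · exact absurd hy (by simp)
  · exact absurd hy (by simp)
  · exact absurd hy (by simp)

lemma pred_gw' {u w : V} {t : ℕ} {y : NetV V}
    (h : NetEdge G T y (NetV.gw' u w t)) : y = NetV.gw u w t ∧ t < T := by
  rcases h with ⟨z1, t2, ht, hx, hy⟩ | ⟨z1, t2, h1, h2, hx, hy⟩ |
    ⟨z1, z2, t2, hadj, hlt, ht, (⟨hx, hy⟩|⟨hx, hy⟩|⟨hx, hy⟩|⟨hx, hy⟩|⟨hx, hy⟩)⟩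
  · exact absurd hy (by simp)
  · exact absurd hy (by simp)
  · exact absurd hy (by simp)
  · exact absurd hy (by simp)
  · simp only [NetV.gw'.injEq] at hy
    obtain ⟨rfl, rfl, rfl⟩ := hy
    exact ⟨hx, ht⟩
  · exact absurd hy (by simp)
  · exact absurd hy (by simp)

end Shapes
section Forward
set_option linter.unusedSectionVars false
set_option maxHeartbeats 1000000

variable {V : Type*} [Fintype V] [LinearOrder V] {G : SimpleGraph V}
  {T K : ℕ} {Ki : Fin K → ℕ} {s g : (Σ i : Fin K, Fin (Ki i)) → V}
  {f : Fin K → NetV V → NetV V → ℕ}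

/-- presence of commodity i at vertex v at end of step t -/
noncomputable def presN (T : ℕ) {K : ℕ} {Ki : Fin K → ℕ}
    (s : (Σ i : Fin K, Fin (Ki i)) → V) (f : Fin K → NetV V → NetV V → ℕ)
    (i : Fin K) (v : V) (t : ℕ) : ℕ :=
  (∑ y ∈ box V T, f i y (NetV.out v t)) +
    Set.indicator {z | ∃ j, z = NetV.out (s ⟨i, j⟩) 0} (fun _ => 1) (NetV.out v t)

/-- extraction of the unique support element of a 0/1 box sum equal to 1 -/
lemma ex_sum {F' : NetV V → ℕ} (hsum : ∑ y ∈ box V T, F' y = 1)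
    (hle : ∀ y, F' y ≤ 1) (hsupp : ∀ y, F' y ≠ 0 → y ∈ box V T) :
    ∃ c, F' c = 1 ∧ ∀ z, F' z ≠ 0 → z = c := by
  obtain ⟨c, hcmem, hcne⟩ := Finset.exists_ne_zero_of_sum_ne_zero
    (by rw [hsum]; exact one_ne_zero)
  refine ⟨c, le_antisymm (hle c) (Nat.one_le_iff_ne_zero.2 hcne), ?_⟩
  intro z hz
  by_contra hzc
  have := two_le_sum F' hzc (hsupp z hz) hcmem
    (Nat.one_le_iff_ne_zero.2 hz) (Nat.one_le_iff_ne_zero.2 hcne)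
  omega

lemma f_le_cap (hcap : ∀ x y, (∑ i, f i x y) ≤ 1) (i : Fin K) (x y : NetV V) :
    f i x y ≤ 1 :=
  le_trans (Finset.single_le_sum (f := fun i => f i x y)
    (fun _ _ => Nat.zero_le _) (Finset.mem_univ i)) (hcap x y)

lemma fedge (hedge : ∀ i x y, ¬ NetEdge G T x y → f i x y = 0)
    {i : Fin K} {x y : NetV V} (h : f i x y ≠ 0) : NetEdge G T x y := by
  by_contra he
  exact h (hedge i x y he)

/-- conservation in box-sum form -/
lemma consBox (hedge : ∀ i x y, ¬ NetEdge G T x y → f i x y = 0)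
    (hcons : ∀ i x,
      (∑ᶠ y, f i y x) +
        Set.indicator {z | ∃ j, z = NetV.out (s ⟨i, j⟩) 0} (fun _ => 1) x
      = (∑ᶠ y, f i x y) +
        Set.indicator {z | ∃ j, z = NetV.out (g ⟨i, j⟩) T} (fun _ => 1) x)
    (i : Fin K) (x : NetV V) :
    (∑ y ∈ box V T, f i y x) +
        Set.indicator {z | ∃ j, z = NetV.out (s ⟨i, j⟩) 0} (fun _ => 1) x
      = (∑ y ∈ box V T, f i x y) +
        Set.indicator {z | ∃ j, z = NetV.out (g ⟨i, j⟩) T} (fun _ => 1) x := by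
  have h1 := finsum_eq_box_sum_left (G := G) (T := T) (f i) (fun a b hab => hedge i a b hab) x
  have h2 := finsum_eq_box_sum_right (G := G) (T := T) (f i) (fun a b hab => hedge i a b hab) x
  rw [← h1, ← h2]
  exact hcons i x

/-- total-flow conservation at a vertex that is not an out-vertex -/
lemma consBoxF (hedge : ∀ i x y, ¬ NetEdge G T x y → f i x y = 0)
    (hcons : ∀ i x,
      (∑ᶠ y, f i y x) +
        Set.indicator {z | ∃ j, z = NetV.out (s ⟨i, j⟩) 0} (fun _ => 1) x
      = (∑ᶠ y, f i x y) +
        Set.indicator {z | ∃ j, z = NetV.out (g ⟨i, j⟩) T} (fun _ => 1) x)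
    (x : NetV V) (hx : ∀ v t, x ≠ NetV.out v t) :
    (∑ y ∈ box V T, ∑ i, f i y x) = ∑ y ∈ box V T, ∑ i, f i x y := by
  rw [Finset.sum_comm, Finset.sum_comm (s := box V T)]
  apply Finset.sum_congr rfl
  intro i _
  have h := consBox hedge hcons i x
  rw [Set.indicator_of_notMem (fun hm => by
        obtain ⟨j, hj⟩ := hm; exact hx _ _ hj),
      Set.indicator_of_notMem (fun hm => by
        obtain ⟨j, hj⟩ := hm; exact hx _ _ hj)] at h
  simpa using h

lemma fi_le_sum (i : Fin K) (x : NetV V) :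
    ∀ S : Finset (NetV V), (∑ y ∈ S, f i y x) ≤ ∑ y ∈ S, ∑ j, f j y x :=
  fun S => Finset.sum_le_sum (fun y _ =>
    Finset.single_le_sum (f := fun j => f j y x) (fun _ _ => Nat.zero_le _)
      (Finset.mem_univ i))

lemma fi_le_sum' (i : Fin K) (x : NetV V) :
    ∀ S : Finset (NetV V), (∑ y ∈ S, f i x y) ≤ ∑ y ∈ S, ∑ j, f j x y :=
  fun S => Finset.sum_le_sum (fun y _ =>
    Finset.single_le_sum (f := fun j => f j x y) (fun _ _ => Nat.zero_le _)
      (Finset.mem_univ i))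

/-- bound: total inflow into an out-vertex is at most 1 -/
lemma bF_out (hcap : ∀ x y, (∑ i, f i x y) ≤ 1)
    (hedge : ∀ i x y, ¬ NetEdge G T x y → f i x y = 0) (v : V) (t : ℕ) :
    (∑ y ∈ box V T, ∑ i, f i y (NetV.out v t)) ≤ 1 := by
  apply sum_le_one _ (fun y => hcap y _)
  intro a _ b _ ha hb
  have hea : NetEdge G T a (NetV.out v t) := by
    by_contra he
    exact ha (Finset.sum_eq_zero fun i _ => hedge i _ _ he)
  have heb : NetEdge G T b (NetV.out v t) := by
    by_contra he
    exact hb (Finset.sum_eq_zero fun i _ => hedge i _ _ he)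
  rw [(pred_out hea).1, (pred_out heb).1]

lemma bF_gw' (hcap : ∀ x y, (∑ i, f i x y) ≤ 1)
    (hedge : ∀ i x y, ¬ NetEdge G T x y → f i x y = 0) (u w : V) (t : ℕ) :
    (∑ y ∈ box V T, ∑ i, f i y (NetV.gw' u w t)) ≤ 1 := by
  apply sum_le_one _ (fun y => hcap y _)
  intro a _ b _ ha hb
  have hea : NetEdge G T a (NetV.gw' u w t) := by
    by_contra he
    exact ha (Finset.sum_eq_zero fun i _ => hedge i _ _ he)
  have heb : NetEdge G T b (NetV.gw' u w t) := by
    by_contra he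
    exact hb (Finset.sum_eq_zero fun i _ => hedge i _ _ he)
  rw [(pred_gw' hea).1, (pred_gw' heb).1]

lemma bF_inn (hcap : ∀ x y, (∑ i, f i x y) ≤ 1)
    (hedge : ∀ i x y, ¬ NetEdge G T x y → f i x y = 0)
    (hcons : ∀ i x,
      (∑ᶠ y, f i y x) +
        Set.indicator {z | ∃ j, z = NetV.out (s ⟨i, j⟩) 0} (fun _ => 1) x
      = (∑ᶠ y, f i x y) +
        Set.indicator {z | ∃ j, z = NetV.out (g ⟨i, j⟩) T} (fun _ => 1) x)
    (v : V) (t : ℕ) :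
    (∑ y ∈ box V T, ∑ i, f i y (NetV.inn v t)) ≤ 1 := by
  rw [consBoxF (s := s) (g := g) hedge hcons _ (fun _ _ h => by simp at h)]
  apply sum_le_one _ (fun y => hcap _ y)
  intro a _ b _ ha hb
  have hea : NetEdge G T (NetV.inn v t) a := by
    by_contra he
    exact ha (Finset.sum_eq_zero fun i _ => hedge i _ _ he)
  have heb : NetEdge G T (NetV.inn v t) b := by
    by_contra he
    exact hb (Finset.sum_eq_zero fun i _ => hedge i _ _ he)
  rw [(succ_inn hea).1, (succ_inn heb).1]

lemma bF_gw (hcap : ∀ x y, (∑ i, f i x y) ≤ 1)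
    (hedge : ∀ i x y, ¬ NetEdge G T x y → f i x y = 0)
    (hcons : ∀ i x,
      (∑ᶠ y, f i y x) +
        Set.indicator {z | ∃ j, z = NetV.out (s ⟨i, j⟩) 0} (fun _ => 1) x
      = (∑ᶠ y, f i x y) +
        Set.indicator {z | ∃ j, z = NetV.out (g ⟨i, j⟩) T} (fun _ => 1) x)
    (u w : V) (t : ℕ) :
    (∑ y ∈ box V T, ∑ i, f i y (NetV.gw u w t)) ≤ 1 := by
  rw [consBoxF (s := s) (g := g) hedge hcons _ (fun _ _ h => by simp at h)]
  apply sum_le_one _ (fun y => hcap _ y)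
  intro a _ b _ ha hb
  have hea : NetEdge G T (NetV.gw u w t) a := by
    by_contra he
    exact ha (Finset.sum_eq_zero fun i _ => hedge i _ _ he)
  have heb : NetEdge G T (NetV.gw u w t) b := by
    by_contra he
    exact hb (Finset.sum_eq_zero fun i _ => hedge i _ _ he)
  rw [(succ_gw hea).1, (succ_gw heb).1]

end Forward
section Forward2
set_option linter.unusedSectionVars false
set_option maxHeartbeats 1000000

variable {V : Type*} [Fintype V] [LinearOrder V] {G : SimpleGraph V}
  {T K : ℕ} {Ki : Fin K → ℕ} {s g : (Σ i : Fin K, Fin (Ki i)) → V}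
  {f : Fin K → NetV V → NetV V → ℕ}
  (hcap : ∀ x y, (∑ i, f i x y) ≤ 1)
  (hedge : ∀ i x y, ¬ NetEdge G T x y → f i x y = 0)
  (hcons : ∀ i x,
      (∑ᶠ y, f i y x) +
        Set.indicator {z | ∃ j, z = NetV.out (s ⟨i, j⟩) 0} (fun _ => 1) x
      = (∑ᶠ y, f i x y) +
        Set.indicator {z | ∃ j, z = NetV.out (g ⟨i, j⟩) T} (fun _ => 1) x)

lemma ge_one_of_f {i : Fin K} {a x : NetV V} (h : f i a x = 1) :
    1 ≤ ∑ j, f j a x :=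
  calc (1:ℕ) = f i a x := h.symm
    _ ≤ ∑ j, f j a x := Finset.single_le_sum (f := fun j => f j a x)
        (fun _ _ => Nat.zero_le _) (Finset.mem_univ i)

include hcap hedge hcons

lemma thru_inn {i : Fin K} {w : V} {t : ℕ} (ht : t < T)
    {y0 : NetV V} (hy0 : y0 ∈ box V T) (h1 : f i y0 (NetV.inn w (t+1)) = 1) :
    presN T s f i w (t+1) = 1 ∧ f i (NetV.inn w (t+1)) (NetV.out w (t+1)) = 1 := by
  have hIn_ge : 1 ≤ ∑ y ∈ box V T, f i y (NetV.inn w (t+1)) :=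
    le_trans (by rw [h1])
      (Finset.single_le_sum (fun y _ => Nat.zero_le _) hy0)
  have hIn_le : (∑ y ∈ box V T, f i y (NetV.inn w (t+1))) ≤ 1 :=
    le_trans (fi_le_sum i _ _) (bF_inn (s := s) (g := g) hcap hedge hcons w (t+1))
  have hc := consBox (s := s) (g := g) hedge hcons i (NetV.inn w (t+1))
  rw [Set.indicator_of_notMem (by rintro ⟨j, hj⟩; simp at hj),
      Set.indicator_of_notMem (by rintro ⟨j, hj⟩; simp at hj)] at hc
  have hOut : (∑ y ∈ box V T, f i (NetV.inn w (t+1)) y) = 1 := by omega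
  obtain ⟨c, hc1, -⟩ := ex_sum hOut (f_le_cap hcap i _)
    (fun y hy => (edge_mem_box (fedge hedge hy)).2)
  have he := fedge hedge (show f i (NetV.inn w (t+1)) c ≠ 0 by rw [hc1]; omega)
  obtain ⟨hceq, -, -⟩ := succ_inn he
  subst hceq
  refine ⟨?_, hc1⟩
  have hIn2_ge : 1 ≤ ∑ y ∈ box V T, f i y (NetV.out w (t+1)) :=
    le_trans (by rw [hc1])
      (Finset.single_le_sum (fun y _ => Nat.zero_le _) (mem_box (x := NetV.inn w (t+1)) (by omega)))
  have hIn2_le : (∑ y ∈ box V T, f i y (NetV.out w (t+1))) ≤ 1 :=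
    le_trans (fi_le_sum i _ _) (bF_out hcap hedge w (t+1))
  unfold presN
  rw [Set.indicator_of_notMem (by
    rintro ⟨j, hj⟩
    simp only [NetV.out.injEq] at hj
    omega)]
  omega

/-- the witness produced by `stepLem` -/
abbrev Witness (G : SimpleGraph V) (T : ℕ) {K : ℕ}
    (f : Fin K → NetV V → NetV V → ℕ) (i : Fin K) (v w : V) (t : ℕ) : Prop :=
  (w = v ∧ f i (NetV.out v t) (NetV.inn w (t+1)) = 1) ∨
  (∃ u u', G.Adj u u' ∧ u < u' ∧ (v = u ∨ v = u') ∧ (w = u ∨ w = u') ∧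
    f i (NetV.out v t) (NetV.gw u u' t) = 1 ∧
    f i (NetV.gw' u u' t) (NetV.inn w (t+1)) = 1)

lemma stepLem {i : Fin K} {v : V} {t : ℕ} (ht : t < T)
    (hp : presN T s f i v t = 1) :
    ∃ w, presN T s f i w (t+1) = 1 ∧ (w = v ∨ G.Adj v w) ∧
      Witness G T f i v w t := by
  have hc := consBox (s := s) (g := g) hedge hcons i (NetV.out v t)
  rw [show Set.indicator {z | ∃ j, z = NetV.out (g ⟨i, j⟩) T}
        (fun _ => (1:ℕ)) (NetV.out v t) = 0 from
      Set.indicator_of_notMem (by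
        rintro ⟨j, hj⟩
        simp only [NetV.out.injEq] at hj
        omega) _] at hc
  unfold presN at hp
  have hOut : (∑ y ∈ box V T, f i (NetV.out v t) y) = 1 := by omega
  obtain ⟨y0, h1, -⟩ := ex_sum hOut (f_le_cap hcap i _)
    (fun y hy => (edge_mem_box (fedge hedge hy)).2)
  have he := fedge hedge (show f i (NetV.out v t) y0 ≠ 0 by rw [h1]; omega)
  obtain ⟨-, hy0⟩ := succ_out he
  rcases hy0 with rfl | ⟨u, u', hadj, hlt, hvu, rfl⟩
  · obtain ⟨hpres, -⟩ := thru_inn hcap hedge hcons ht (mem_box (x := NetV.out v t) (by omega)) h1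
    exact ⟨v, hpres, Or.inl rfl, Or.inl ⟨rfl, h1⟩⟩
  · have hg_ge : 1 ≤ ∑ y ∈ box V T, f i y (NetV.gw u u' t) :=
      le_trans (by rw [h1])
        (Finset.single_le_sum (fun y _ => Nat.zero_le _) (mem_box (x := NetV.out v t) (by omega)))
    have hg_le : (∑ y ∈ box V T, f i y (NetV.gw u u' t)) ≤ 1 :=
      le_trans (fi_le_sum i _ _) (bF_gw (s := s) (g := g) hcap hedge hcons u u' t)
    have hcg := consBox (s := s) (g := g) hedge hcons i (NetV.gw u u' t)
    rw [Set.indicator_of_notMem (by rintro ⟨j, hj⟩; simp at hj),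
        Set.indicator_of_notMem (by rintro ⟨j, hj⟩; simp at hj)] at hcg
    have hgOut : (∑ y ∈ box V T, f i (NetV.gw u u' t) y) = 1 := by omega
    obtain ⟨c, hc1, -⟩ := ex_sum hgOut (f_le_cap hcap i _)
      (fun y hy => (edge_mem_box (fedge hedge hy)).2)
    have hce := fedge hedge (show f i (NetV.gw u u' t) c ≠ 0 by rw [hc1]; omega)
    obtain ⟨rfl, -⟩ := succ_gw hce
    have hg'_ge : 1 ≤ ∑ y ∈ box V T, f i y (NetV.gw' u u' t) :=
      le_trans (by rw [hc1])
        (Finset.single_le_sum (fun y _ => Nat.zero_le _) (mem_box (x := NetV.gw u u' t) (by omega)))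
    have hg'_le : (∑ y ∈ box V T, f i y (NetV.gw' u u' t)) ≤ 1 :=
      le_trans (fi_le_sum i _ _) (bF_gw' hcap hedge u u' t)
    have hcg' := consBox (s := s) (g := g) hedge hcons i (NetV.gw' u u' t)
    rw [Set.indicator_of_notMem (by rintro ⟨j, hj⟩; simp at hj),
        Set.indicator_of_notMem (by rintro ⟨j, hj⟩; simp at hj)] at hcg'
    have hg'Out : (∑ y ∈ box V T, f i (NetV.gw' u u' t) y) = 1 := by omega
    obtain ⟨c', hc'1, -⟩ := ex_sum hg'Out (f_le_cap hcap i _)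
      (fun y hy => (edge_mem_box (fedge hedge hy)).2)
    have hc'e := fedge hedge (show f i (NetV.gw' u u' t) c' ≠ 0 by rw [hc'1]; omega)
    obtain ⟨-, -, -, hc'⟩ := succ_gw' hc'e
    rcases hc' with rfl | rfl
    · obtain ⟨hpres, -⟩ := thru_inn hcap hedge hcons ht
        (mem_box (x := NetV.gw' u u' t) (by omega)) hc'1
      refine ⟨u, hpres, ?_,
        Or.inr ⟨u, u', hadj, hlt, hvu, Or.inl rfl, h1, hc'1⟩⟩
      rcases hvu with rfl | rfl
      · exact Or.inl rfl
      · exact Or.inr hadj.symm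
    · obtain ⟨hpres, -⟩ := thru_inn hcap hedge hcons ht
        (mem_box (x := NetV.gw' u u' t) (by omega)) hc'1
      refine ⟨u', hpres, ?_,
        Or.inr ⟨u, u', hadj, hlt, hvu, Or.inr rfl, h1, hc'1⟩⟩
      rcases hvu with rfl | rfl
      · exact Or.inr hadj
      · exact Or.inl rfl

lemma collideLem {i1 i2 : Fin K} {v1 v2 w : V} {t : ℕ} (ht : t < T)
    (hne : v1 ≠ v2)
    (W1 : Witness G T f i1 v1 w t) (W2 : Witness G T f i2 v2 w t) : False := by
  have hbinn := bF_inn (s := s) (g := g) hcap hedge hcons w (t+1)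
  have hbgw : ∀ u u' : V, (∑ y ∈ box V T, ∑ i, f i y (NetV.gw u u' t)) ≤ 1 :=
    fun u u' => bF_gw (s := s) (g := g) hcap hedge hcons u u' t
  rcases W1 with ⟨rfl, h1⟩ | ⟨u1, u1', ha1, hl1, hv1, hw1, hg1, hG1⟩
  · rcases W2 with ⟨rfl, h2⟩ | ⟨u2, u2', ha2, hl2, hv2, hw2, hg2, hG2⟩
    · exact hne rfl
    · -- stay vs gadget: two distinct sources into inn w (t+1)
      have h2le := two_le_sum (sf := box V T) (fun y => ∑ i, f i y (NetV.inn w (t+1)))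
        (show (NetV.out w t : NetV V) ≠ NetV.gw' u2 u2' t by simp)
        (mem_box (by omega)) (mem_box (by omega))
        (ge_one_of_f h1) (ge_one_of_f hG2)
      beta_reduce at h2le
      omega
  · rcases W2 with ⟨rfl, h2⟩ | ⟨u2, u2', ha2, hl2, hv2, hw2, hg2, hG2⟩
    · have h2le := two_le_sum (sf := box V T) (fun y => ∑ i, f i y (NetV.inn w (t+1)))
        (show (NetV.gw' u1 u1' t : NetV V) ≠ NetV.out w t by simp)
        (mem_box (by omega)) (mem_box (by omega))
        (ge_one_of_f hG1) (ge_one_of_f h2)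
      beta_reduce at h2le
      omega
    · by_cases hsame : u1 = u2 ∧ u1' = u2'
      · obtain ⟨rfl, rfl⟩ := hsame
        have h2le := two_le_sum (sf := box V T) (fun y => ∑ i, f i y (NetV.gw u1 u1' t))
          (show (NetV.out v1 t : NetV V) ≠ NetV.out v2 t by
            simp [NetV.out.injEq]; intro h; exact absurd h hne)
          (mem_box (by omega)) (mem_box (by omega))
          (ge_one_of_f hg1) (ge_one_of_f hg2)
        beta_reduce at h2le
        have := hbgw u1 u1'
        omega
      · have h2le := two_le_sum (sf := box V T) (fun y => ∑ i, f i y (NetV.inn w (t+1)))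
          (show (NetV.gw' u1 u1' t : NetV V) ≠ NetV.gw' u2 u2' t by
            simp only [ne_eq, NetV.gw'.injEq, not_and]
            intro e1 e2
            exact absurd ⟨e1, e2⟩ hsame)
          (mem_box (by omega)) (mem_box (by omega))
          (ge_one_of_f hG1) (ge_one_of_f hG2)
        beta_reduce at h2le
        omega

lemma swapLem {i1 i2 : Fin K} {v w : V} {t : ℕ} (ht : t < T) (hvw : v ≠ w)
    (W1 : Witness G T f i1 v w t) (W2 : Witness G T f i2 w v t) : False := by
  have key : ∀ p q : V, p < q → (v = p ∨ v = q) → (w = p ∨ w = q) →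
      p = min v w ∧ q = max v w := by
    intro p q hpq hv hw
    rcases hv with rfl | rfl <;> rcases hw with rfl | rfl
    · exact absurd rfl hvw
    · exact ⟨(min_eq_left hpq.le).symm, (max_eq_right hpq.le).symm⟩
    · exact ⟨(min_eq_right hpq.le).symm, (max_eq_left hpq.le).symm⟩
    · exact absurd rfl hvw
  rcases W1 with ⟨rfl, -⟩ | ⟨u1, u1', ha1, hl1, hv1, hw1, hg1, -⟩
  · exact hvw rfl
  · rcases W2 with ⟨rfl, -⟩ | ⟨u2, u2', ha2, hl2, hv2, hw2, hg2, -⟩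
    · exact hvw rfl
    · obtain ⟨e1, e1'⟩ := key u1 u1' hl1 hv1 hw1
      obtain ⟨e2, e2'⟩ := key u2 u2' hl2 hw2 hv2
      obtain rfl : u1 = u2 := e1.trans e2.symm
      obtain rfl : u1' = u2' := e1'.trans e2'.symm
      have h2le := two_le_sum (sf := box V T) (fun y => ∑ i, f i y (NetV.gw u1 u1' t))
        (show (NetV.out v t : NetV V) ≠ NetV.out w t by
          simp [NetV.out.injEq]; intro h; exact absurd h hvw)
        (mem_box (by omega)) (mem_box (by omega))
        (ge_one_of_f hg1) (ge_one_of_f hg2)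
      beta_reduce at h2le
      have := bF_gw (s := s) (g := g) hcap hedge hcons u1 u1' t
      omega

lemma finishLem {i : Fin K} {v : V} (hp : presN T s f i v T = 1) :
    ∃ j, v = g ⟨i, j⟩ := by
  have hc := consBox (s := s) (g := g) hedge hcons i (NetV.out v T)
  have hOut0 : (∑ y ∈ box V T, f i (NetV.out v T) y) = 0 :=
    Finset.sum_eq_zero (fun y _ => by
      by_contra hz
      exact absurd (succ_out (fedge hedge hz)).1 (lt_irrefl T))
  unfold presN at hp
  rw [hOut0, hp] at hc
  by_cases hm : (NetV.out v T) ∈ {z | ∃ j, z = NetV.out (g ⟨i, j⟩) T}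
  · obtain ⟨j, hj⟩ := hm
    simp only [NetV.out.injEq] at hj
    exact ⟨j, hj.1⟩
  · rw [Set.indicator_of_notMem hm] at hc
    omega

lemma baseLem (i : Fin K) (j : Fin (Ki i)) : presN T s f i (s ⟨i, j⟩) 0 = 1 := by
  unfold presN
  rw [Finset.sum_eq_zero (fun y _ => by
      by_contra hz
      have := (pred_out (fedge hedge hz)).2.1
      omega),
    Set.indicator_of_mem (show _ ∈ {z | ∃ j', z = NetV.out (s ⟨i, j'⟩) 0} from
      ⟨j, rfl⟩)]

end Forward2
section Forward3
set_option linter.unusedSectionVars false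
set_option maxHeartbeats 1000000

noncomputable def traceF {V : Type*} [Fintype V] [LinearOrder V] (T : ℕ)
    {K : ℕ} {Ki : Fin K → ℕ}
    (s : (Σ i : Fin K, Fin (Ki i)) → V) (f : Fin K → NetV V → NetV V → ℕ)
    (nxt : ∀ (i : Fin K) (v : V) (t : ℕ), t < T → presN T s f i v t = 1 → V)
    (a : Σ i : Fin K, Fin (Ki i)) : ℕ → V
  | 0 => s a
  | (t+1) =>
    if h : t < T ∧ presN T s f a.1 (traceF T s f nxt a t) t = 1 then
      nxt a.1 (traceF T s f nxt a t) t h.1 h.2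
    else traceF T s f nxt a t

lemma forward {V : Type*} [Fintype V] [LinearOrder V] (G : SimpleGraph V)
    (T K : ℕ) (Ki : Fin K → ℕ)
    (s g : (Σ i : Fin K, Fin (Ki i)) → V)
    (hs : Function.Injective s) (hg : Function.Injective g)
    (hflow : ∃ f : Fin K → NetV V → NetV V → ℕ, IsMCFlow G T K Ki s g f) :
    TAPFSolLE G K Ki s g T := by
  obtain ⟨f, hcap, hedge, hcons⟩ := hflow
  have step := fun (i : Fin K) (v : V) (t : ℕ) (ht : t < T)
      (hp : presN T s f i v t = 1) =>
    stepLem (g := g) hcap hedge hcons ht hp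
  choose nxt hn1 hn2 hn3 using step
  have htr0 : ∀ a, traceF T s f nxt a 0 = s a := fun a => by rw [traceF]
  have hpres : ∀ a t, t ≤ T → presN T s f a.1 (traceF T s f nxt a t) t = 1 := by
    intro a t
    induction t with
    | zero =>
      intro _
      rw [htr0 a]
      have := baseLem (g := g) hcap hedge hcons a.1 a.2
      rwa [Sigma.eta] at this
    | succ t ih =>
      intro hle
      have ht : t < T := by omega
      have hp := ih (by omega)
      have he : traceF T s f nxt a (t+1) = nxt a.1 (traceF T s f nxt a t) t ht hp := by
        rw [traceF]
        exact dif_pos ⟨ht, hp⟩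
      rw [he]
      exact hn1 a.1 (traceF T s f nxt a t) t ht hp
  have hstep : ∀ a t, t < T →
      Witness G T f a.1 (traceF T s f nxt a t) (traceF T s f nxt a (t+1)) t ∧
        (traceF T s f nxt a (t+1) = traceF T s f nxt a t ∨ G.Adj (traceF T s f nxt a t) (traceF T s f nxt a (t+1))) := by
    intro a t ht
    have hp := hpres a t (le_of_lt ht)
    have he : traceF T s f nxt a (t+1) = nxt a.1 (traceF T s f nxt a t) t ht hp := by
      rw [traceF]
      exact dif_pos ⟨ht, hp⟩
    rw [he]
    exact ⟨hn3 a.1 (traceF T s f nxt a t) t ht hp, hn2 a.1 (traceF T s f nxt a t) t ht hp⟩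
  have hinj : ∀ t, t ≤ T → ∀ a b, a ≠ b → traceF T s f nxt a t ≠ traceF T s f nxt b t := by
    intro t
    induction t with
    | zero =>
      intro _ a b hab h
      rw [htr0 a, htr0 b] at h
      exact hab (hs h)
    | succ t ih =>
      intro hle a b hab h
      have ht : t < T := by omega
      have hne := ih (by omega) a b hab
      have W1 := (hstep a t ht).1
      have W2 := (hstep b t ht).1
      rw [h] at W1
      exact collideLem (s := s) (g := g) hcap hedge hcons ht hne W1 W2
  have hfin : ∀ (i : Fin K) (j : Fin (Ki i)), ∃ j',
      traceF T s f nxt ⟨i, j⟩ T = g ⟨i, j'⟩ :=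
    fun i j => finishLem (s := s) hcap hedge hcons (hpres ⟨i, j⟩ T le_rfl)
  choose τ hτ using hfin
  have hτinj : ∀ i : Fin K, Function.Injective (τ i) := by
    intro i j1 j2 h
    by_contra hne
    have hab : (⟨i, j1⟩ : Σ i : Fin K, Fin (Ki i)) ≠ ⟨i, j2⟩ := by
      simp [hne]
    apply hinj T le_rfl ⟨i, j1⟩ ⟨i, j2⟩ hab
    rw [hτ i j1, hτ i j2, h]
  refine ⟨fun i => Equiv.ofBijective _ ((Finite.injective_iff_bijective).1 (hτinj i)),
    fun i j t => traceF T s f nxt ⟨i, j⟩ (min t T), ?_, ?_, ?_, ?_, ?_⟩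
  · intro i j
    beta_reduce
    rw [Nat.zero_min, htr0]
  · intro i j t ht
    beta_reduce
    rw [min_eq_right ht]
    exact hτ i j
  · intro i j t
    beta_reduce
    by_cases ht : t < T
    · rw [min_eq_left (le_of_lt ht), min_eq_left (by omega : t + 1 ≤ T)]
      rcases (hstep ⟨i, j⟩ t ht).2 with h | h
      · exact Or.inl h.symm
      · exact Or.inr h
    · rw [min_eq_right (by omega : T ≤ t), min_eq_right (by omega : T ≤ t + 1)]
      exact Or.inl rfl
  · intro a b t hab
    beta_reduce
    exact hinj (min t T) (min_le_right t T) a b hab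
  · intro a b t hab hsw
    obtain ⟨h1, h2⟩ := hsw
    beta_reduce at h1 h2
    by_cases ht : t < T
    · rw [min_eq_left (le_of_lt ht), min_eq_left (by omega : t + 1 ≤ T)] at h1 h2
      have hne := hinj t (by omega) a b hab
      have W1 := (hstep a t ht).1
      have W2 := (hstep b t ht).1
      rw [← h2] at W1
      rw [← h1] at W2
      exact swapLem (s := s) (g := g) hcap hedge hcons ht hne W1 W2
    · rw [min_eq_right (by omega : T ≤ t), min_eq_right (by omega : T ≤ t + 1)] at h1
      exact hinj T le_rfl a b hab h1

end Forward3


/-- Correspondence between feasible integer multi-commodity flows of total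
value equal to the number of agents on the T-step time-expanded network and
TAPF solutions with makespan at most T. -/
theorem stmt9 {V : Type*} [Fintype V] [LinearOrder V] (G : SimpleGraph V)
    (T K : ℕ) (Ki : Fin K → ℕ)
    (s g : (Σ i : Fin K, Fin (Ki i)) → V)
    (hs : Function.Injective s) (hg : Function.Injective g) :
    (∃ f : Fin K → NetV V → NetV V → ℕ, IsMCFlow G T K Ki s g f)
    ↔ TAPFSolLE G K Ki s g T := by
  constructor
  · exact forward G T K Ki s g hs hg
  · exact backward G T K Ki s g hs hg
end

section
/- The key of any node in the CBM search tree is a lower bound on the makespan of every TAPF solution that obeys that node's constraints. Formally: in a tree where the root's key is the maximum over teams of the minimum team cost of constraint-free paths, and a child's key is max(parent's key, team cost of the replanned team under the child's constraints, team costs of all other teams' inherited paths), the key never exceeds the makespan of any solution obeying the node's constraints. -/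
/-- The key of any node in the CBM search tree is a lower bound on the
makespan of every solution obeying that node's constraints. Abstract setting:
`pathCost N i` is the team cost of team i's paths stored at node N; the root's
paths minimize each team cost subject to no constraints and its key is the
maximum team cost; a non-root node N replans exactly team `replanned N`
(starting the low-level search from its parent's key, so its new team cost is
at most max(parent's key, the team cost of that team in any solution obeying
N's constraints)), inherits the other teams' paths, and its key is the maximum
of its parent's key and all its team costs. -/
theorem stmt12 {Node Team Sol Constraint : Type*} [Fintype Team]
    (root : Node) (par : Node → Node) (S : Node → Set Constraint)
    (key : Node → ℕ) (pathCost : Node → Team → ℕ)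
    (obeys : Sol → Constraint → Prop) (teamCost : Sol → Team → ℕ)
    (replanned : Node → Team)
    (hreach : ∀ N : Node, ∃ n : ℕ, par^[n] N = root)
    (hSroot : S root = ∅)
    (hrootOpt : ∀ (i : Team) (sol : Sol), pathCost root i ≤ teamCost sol i)
    (hkeyroot : key root = Finset.univ.sup (pathCost root))
    (hSmono : ∀ N : Node, N ≠ root → S (par N) ⊆ S N)
    (hinherit : ∀ N : Node, N ≠ root → ∀ i : Team, i ≠ replanned N →
      pathCost N i = pathCost (par N) i)
    (hlow : ∀ N : Node, N ≠ root → ∀ sol : Sol, (∀ c ∈ S N, obeys sol c) →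
      pathCost N (replanned N) ≤ max (key (par N)) (teamCost sol (replanned N)))
    (hkey : ∀ N : Node, N ≠ root →
      key N = max (key (par N)) (Finset.univ.sup (pathCost N))) :
    ∀ (N : Node) (sol : Sol), (∀ c ∈ S N, obeys sol c) →
      key N ≤ Finset.univ.sup (teamCost sol) := by
  have main : ∀ (n : ℕ) (N : Node), par^[n] N = root → ∀ sol : Sol,
      (∀ c ∈ S N, obeys sol c) →
      key N ≤ Finset.univ.sup (teamCost sol) ∧
      ∀ i : Team, pathCost N i ≤ Finset.univ.sup (teamCost sol) := by
    intro n
    induction n with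
    | zero =>
      intro N h sol _
      simp only [Function.iterate_zero, id] at h
      subst h
      refine ⟨?_, fun i => le_trans (hrootOpt i sol) (Finset.le_sup (Finset.mem_univ i))⟩
      rw [hkeyroot]
      exact Finset.sup_le fun i _ =>
        le_trans (hrootOpt i sol) (Finset.le_sup (Finset.mem_univ i))
    | succ n ih =>
      intro N h sol hs
      by_cases hN : N = root
      · subst hN
        refine ⟨?_, fun i => le_trans (hrootOpt i sol) (Finset.le_sup (Finset.mem_univ i))⟩
        rw [hkeyroot]
        exact Finset.sup_le fun i _ =>
          le_trans (hrootOpt i sol) (Finset.le_sup (Finset.mem_univ i))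
      · have hpar : par^[n] (par N) = root := by
          rwa [Function.iterate_succ_apply] at h
        have hsolpar : ∀ c ∈ S (par N), obeys sol c := fun c hc => hs c (hSmono N hN hc)
        obtain ⟨hPk, hPp⟩ := ih (par N) hpar sol hsolpar
        have hQ : ∀ i : Team, pathCost N i ≤ Finset.univ.sup (teamCost sol) := by
          intro i
          by_cases hi : i = replanned N
          · subst hi
            exact le_trans (hlow N hN sol hs)
              (max_le hPk (Finset.le_sup (Finset.mem_univ _)))
          · rw [hinherit N hN i hi]; exact hPp i
        refine ⟨?_, hQ⟩
        rw [hkey N hN]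
        exact max_le hPk (Finset.sup_le fun i _ => hQ i)
  intro N sol hs
  obtain ⟨n, hn⟩ := hreach N
  exact (main n N hn sol hs).1
end

section
/- Suppose a best-first search over a finitely-branching tree of nodes with keys pops nodes in non-decreasing key order, every popped node whose paths are collision-free terminates with a solution of makespan at most its key, every node whose constraints are obeyed by a fixed optimal solution of makespan x has key at most x, and every popped non-terminal node with constraints obeyed by the optimal solution generates a child whose constraints are also obeyed by the optimal solution. If the total number of generatable nodes is finite, then the search terminates with a solution of makespan exactly x (i.e., an optimal solution). -/
open scoped Classical

/-- Abstract optimality of CBM's best-first search. `Q n` is the priority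
queue before step n, `pop n` the node popped at step n (when the queue is
nonempty), `children n` the nodes generated and inserted at step n, `mk N` the
makespan of the solution returned when a terminal node N is popped, `Obeyed N`
means the fixed optimal solution (of makespan x) obeys N's constraints. If
nodes are popped in non-decreasing key order, every terminal node yields a
solution of makespan at most its key (and at least the optimal makespan x),
every Obeyed node has key at most x, every popped non-terminal Obeyed node
generates an Obeyed child, generated nodes are always new (so, the node
universe being finite, only finitely many nodes are ever generated), then the
search reaches, after popping only non-terminal nodes, a terminal node whose
solution has makespan exactly x. -/
theorem stmt13 {Node : Type*} [Fintype Node]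
    (key mk : Node → ℕ) (Terminal Obeyed : Node → Prop) (x : ℕ)
    (Q : ℕ → Finset Node) (pop : ℕ → Node) (children : ℕ → Finset Node)
    (root : Node)
    (hQ0 : Q 0 = {root}) (hroot : Obeyed root)
    (hmono : ∀ m n : ℕ, m ≤ n → key (pop m) ≤ key (pop n))
    (hpop : ∀ n, (Q n).Nonempty → pop n ∈ Q n ∧ ∀ N ∈ Q n, key (pop n) ≤ key N)
    (hstep : ∀ n, (Q n).Nonempty → ¬ Terminal (pop n) →
      Q (n + 1) = (Q n).erase (pop n) ∪ children n)
    (hterm_mk : ∀ N, Terminal N → mk N ≤ key N)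
    (hterm_opt : ∀ N, Terminal N → x ≤ mk N)
    (hobeyed_key : ∀ N, Obeyed N → key N ≤ x)
    (hgen : ∀ n, (Q n).Nonempty → Obeyed (pop n) → ¬ Terminal (pop n) →
      ∃ N ∈ children n, Obeyed N)
    (hnew : ∀ n N, N ∈ children n → ∀ m ≤ n, N ∉ Q m) :
    ∃ n, (∀ m < n, (Q m).Nonempty ∧ ¬ Terminal (pop m)) ∧
      (Q n).Nonempty ∧ Terminal (pop n) ∧ mk (pop n) = x := by
  -- Invariant: while the search runs, an Obeyed node is in the queue.
  have hinv : ∀ n, (∀ m < n, (Q m).Nonempty ∧ ¬ Terminal (pop m)) →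
      ∃ N ∈ Q n, Obeyed N := by
    intro n
    induction n with
    | zero => intro _; exact ⟨root, by simp [hQ0], hroot⟩
    | succ k ih =>
      intro h
      obtain ⟨N, hN, hNO⟩ := ih (fun m hm => h m (hm.trans (Nat.lt_succ_self k)))
      obtain ⟨hne, hnt⟩ := h k (Nat.lt_succ_self k)
      rw [hstep k hne hnt]
      by_cases hNp : N = pop k
      · obtain ⟨M, hM, hMO⟩ := hgen k hne (hNp ▸ hNO) hnt
        exact ⟨M, Finset.mem_union_right _ hM, hMO⟩
      · exact ⟨N, Finset.mem_union_left _ (Finset.mem_erase.2 ⟨hNp, hN⟩), hNO⟩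
  -- Once popped, a node never reappears (while the search runs).
  have hgone : ∀ m n, m < n → (∀ k < n, (Q k).Nonempty ∧ ¬ Terminal (pop k)) →
      pop m ∉ Q n := by
    intro m n
    induction n with
    | zero => intro h; exact absurd h (Nat.not_lt_zero m)
    | succ k ih =>
      intro hmn h
      obtain ⟨hne, hnt⟩ := h k (Nat.lt_succ_self k)
      rw [hstep k hne hnt]
      intro hmem
      rcases Finset.mem_union.1 hmem with h1 | h1
      · rcases Nat.lt_succ_iff_lt_or_eq.1 hmn with hlt | heq
        · exact ih hlt (fun j hj => h j (hj.trans (Nat.lt_succ_self k)))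
            (Finset.mem_of_mem_erase h1)
        · exact (Finset.mem_erase.1 h1).1 (by rw [heq])
      · exact hnew k _ h1 m (Nat.lt_succ_iff.1 hmn) (hpop m (h m hmn).1).1
  -- The search halts: otherwise `pop` would be injective into a finite type.
  have hhalt : ∃ n, ¬ ((Q n).Nonempty ∧ ¬ Terminal (pop n)) := by
    by_contra hc
    push_neg at hc
    have hinj : Function.Injective pop := by
      intro a b hab
      by_contra hne
      rcases Nat.lt_or_ge a b with hlt | hge
      · exact hgone a b hlt (fun k _ => hc k) (hab ▸ (hpop b (hc b).1).1)
      · have hlt : b < a := lt_of_le_of_ne hge (Ne.symm hne)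
        exact hgone b a hlt (fun k _ => hc k) (hab ▸ (hpop a (hc a).1).1)
    exact not_injective_infinite_finite pop hinj
  classical
  set n := Nat.find hhalt with hndef
  have hn := Nat.find_spec hhalt
  have hrun : ∀ m < n, (Q m).Nonempty ∧ ¬ Terminal (pop m) := by
    intro m hm
    exact not_not.1 (Nat.find_min hhalt hm)
  obtain ⟨N, hN, hNO⟩ := hinv n hrun
  have hQn : (Q n).Nonempty := ⟨N, hN⟩
  have hT : Terminal (pop n) := by
    by_contra hT
    exact hn ⟨hQn, hT⟩
  refine ⟨n, hrun, hQn, hT, le_antisymm ?_ (hterm_opt _ hT)⟩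
  calc mk (pop n) ≤ key (pop n) := hterm_mk _ hT
    _ ≤ key N := (hpop n hQn).2 N hN
    _ ≤ x := hobeyed_key N hNO
end

section
/- If a TAPF instance has no solution, then CBM terminates and reports failure: since only finitely many nodes can be generated and every popped node must have colliding paths (else a solution would exist), the priority queue eventually becomes empty. -/
open scoped Classical

/-! If the queue never empties, every step pops a node that can never come back: it is erased,
and the children added later are fresh. So `pop` would be an injection of `ℕ` into a finite
type. -/

section QueueProcess

variable {α : Type*} [DecidableEq α] {Q : ℕ → Finset α} {pop : ℕ → α} {children : ℕ → Finset α}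

theorem pop_notMem_of_lt (hstep : ∀ n, Q (n + 1) = (Q n).erase (pop n) ∪ children n)
    (hnew : ∀ n N, N ∈ children n → ∀ m ≤ n, N ∉ Q m) (hpop : ∀ n, pop n ∈ Q n)
    {m n : ℕ} (hmn : m < n) : pop m ∉ Q n := by
  induction n, hmn using Nat.le_induction with
  | base =>
    rw [hstep, Finset.mem_union, Finset.mem_erase]
    rintro (⟨hne, -⟩ | hchild)
    · exact hne rfl
    · exact hnew m _ hchild m le_rfl (hpop m)
  | succ n hmn ih =>
    rw [hstep, Finset.mem_union, Finset.mem_erase]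
    rintro (⟨-, hmem⟩ | hchild)
    · exact ih hmem
    · exact hnew n _ hchild m (Nat.le_of_succ_le hmn) (hpop m)

theorem pop_injective (hstep : ∀ n, Q (n + 1) = (Q n).erase (pop n) ∪ children n)
    (hnew : ∀ n N, N ∈ children n → ∀ m ≤ n, N ∉ Q m) (hpop : ∀ n, pop n ∈ Q n) :
    Function.Injective pop := by
  intro m n hmn
  by_contra hne
  rcases Nat.lt_or_gt_of_ne hne with hlt | hlt
  · exact pop_notMem_of_lt hstep hnew hpop hlt (hmn ▸ hpop n)
  · exact pop_notMem_of_lt hstep hnew hpop hlt (hmn ▸ hpop m)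

end QueueProcess

theorem stmt14_general {Node : Type*} [Fintype Node]
    (Terminal : Node → Prop)
    (Q : ℕ → Finset Node) (pop : ℕ → Node) (children : ℕ → Finset Node)
    (hpop : ∀ n, (Q n).Nonempty → pop n ∈ Q n)
    (hstep : ∀ n, (Q n).Nonempty → ¬ Terminal (pop n) →
      Q (n + 1) = (Q n).erase (pop n) ∪ children n)
    (hnew : ∀ n N, N ∈ children n → ∀ m ≤ n, N ∉ Q m)
    (hnosol : ∀ N : Node, ¬ Terminal N) :
    ∃ n, Q n = ∅ := by
  by_contra! hne
  have hinj : Function.Injective pop :=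
    pop_injective (fun n => hstep n (hne n) (hnosol _)) hnew (fun n => hpop n (hne n))
  exact not_injective_infinite_finite pop hinj

/-- If a TAPF instance has no solution, CBM terminates and reports failure:
since only finitely many nodes can be generated (the node universe is finite
and generated nodes are always new) and every popped node is non-terminal
(else a solution would exist), the priority queue eventually becomes empty. -/
theorem stmt14 {Node : Type*} [Fintype Node]
    (Terminal : Node → Prop)
    (Q : ℕ → Finset Node) (pop : ℕ → Node) (children : ℕ → Finset Node)
    (root : Node)
    (hQ0 : Q 0 = {root})
    (hpop : ∀ n, (Q n).Nonempty → pop n ∈ Q n)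
    (hstep : ∀ n, (Q n).Nonempty → ¬ Terminal (pop n) →
      Q (n + 1) = (Q n).erase (pop n) ∪ children n)
    (hempty : ∀ n, Q n = ∅ → Q (n + 1) = ∅)
    (hnew : ∀ n N, N ∈ children n → ∀ m ≤ n, N ∉ Q m)
    (hnosol : ∀ N : Node, ¬ Terminal N) :
    ∃ n, Q n = ∅ :=
  stmt14_general Terminal Q pop children hpop hstep hnew hnosol
end

section
/- When two agents from teams i ≠ i' have a vertex collision (both occupy vertex l at time t), any solution obeying the current node's constraints must obey either the vertex constraint (team i, l, t) or the vertex constraint (team i', l, t); i.e., in any collision-free solution, not both teams can have an agent at vertex l at time t. Hence the branching of CBS/CBM on a vertex collision is exhaustive: every solution obeying the parent's constraints obeys the constraints of at least one child. -/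
/-- Exhaustive branching on a vertex collision: in any vertex-collision-free
solution, for teams i ≠ i', a vertex l and a time t, not both teams can have
an agent at l at time t; i.e., the solution obeys vertex constraint
(team i, l, t) or vertex constraint (team i', l, t). -/
theorem stmt15 {V : Type*} (K : ℕ) (Ki : Fin K → ℕ)
    (p : ∀ i : Fin K, Fin (Ki i) → ℕ → V)
    (hvc : ∀ (a b : Σ i : Fin K, Fin (Ki i)) (t : ℕ), a ≠ b →
      p a.1 a.2 t ≠ p b.1 b.2 t)
    (i i' : Fin K) (hne : i ≠ i') (l : V) (t : ℕ) :
    (∀ j : Fin (Ki i), p i j t ≠ l) ∨ (∀ j : Fin (Ki i'), p i' j t ≠ l) := by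
  by_contra h
  push_neg at h
  obtain ⟨⟨j, hj⟩, ⟨j', hj'⟩⟩ := h
  exact hvc ⟨i, j⟩ ⟨i', j'⟩ t (by simp [hne]) (hj.trans hj'.symm)
end

section
/- When two agents from teams i ≠ i' have an edge collision (one moves from u to v and the other from v to u between times t and t+1), every collision-free solution obeying the parent's constraints obeys at least one of the two child constraints (team i, u, v, t) or (team i', v, u, t). -/
/-- Exhaustive branching on an edge collision: in any edge-collision-free
solution, for teams i ≠ i', vertices u, v and a time t, the solution obeys
edge constraint (team i, u, v, t) or edge constraint (team i', v, u, t): not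
both can some agent of team i move from u to v and some agent of team i' move
from v to u between time steps t and t+1. -/
theorem stmt16 {V : Type*} (K : ℕ) (Ki : Fin K → ℕ)
    (p : ∀ i : Fin K, Fin (Ki i) → ℕ → V)
    (hec : ∀ (a b : Σ i : Fin K, Fin (Ki i)) (t : ℕ), a ≠ b →
      ¬(p a.1 a.2 t = p b.1 b.2 (t + 1) ∧ p b.1 b.2 t = p a.1 a.2 (t + 1)))
    (i i' : Fin K) (hne : i ≠ i') (u v : V) (t : ℕ) :
    (∀ j : Fin (Ki i), ¬(p i j t = u ∧ p i j (t + 1) = v)) ∨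
    (∀ j : Fin (Ki i'), ¬(p i' j t = v ∧ p i' j (t + 1) = u)) := by
  by_contra h
  push_neg at h
  obtain ⟨⟨j, hju, hjv⟩, ⟨j', hjv', hju'⟩⟩ := h
  exact hec ⟨i, j⟩ ⟨i', j'⟩ t (by simp [hne]) ⟨by simp [hju, hju'], by simp [hjv, hjv']⟩
end
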